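/- arXiv:0811.4184 — 8 statements merged into one kernel-verified Lean document; each statement's English description precedes it below -/
import Mathlib

section
/- Let f be a bounded measurable function on [0,∞) with f > ε almost everywhere for some ε > 0, and |f(r) − 1| ≤ J e^{−ar} almost everywhere for constants J > 0 and a ∈ (0,2). If λ solves the Riccati equation λ' + λ² = f with λ(0) > 0, then λ is positive and there exists C = C(a, J, λ(0)) > 0 such that |λ(r) − 1| ≤ C e^{−ar} for all r > 0. -/
/-!
Everything rests on one barrier principle, applied to the integrated equation since `f` is only
controlled almost everywhere: if `u' ≥ 0` whenever `u` lies in a band `[c, m]`, then `u` cannot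
drop below `m` once it is above it. Where `0 ≤ λ ≤ m` with `m² ≤ f`, the equation gives `λ' ≥ 0`,
so `λ ≥ min (λ 0, √ε) > 0`. Since `f → 1`, below any `θ < 1` the solution grows linearly, so it
eventually exceeds `θ` and then stays above it. Taking `θ > a - 1`, the deviation
`v = (λ - 1) e^{ar}` solves `v' = (f - 1) e^{ar} - (λ + 1 - a) v`, a linear equation with forcing
bounded by `J` and damping at least `θ + 1 - a > 0`, so barriers at `± max (|v R|, J / (θ + 1 - a))`
bound `v` from then on; before that `v` is bounded by compactness.
-/

open MeasureTheory Real Set Filter Topology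

theorem mul_sub_le_sub_of_hasDerivAt_of_ae_le {u u' : ℝ → ℝ} {x y c : ℝ} (hxy : x ≤ y)
    (hu : ∀ t ∈ Icc x y, HasDerivAt u (u' t) t) (hu' : IntervalIntegrable u' volume x y)
    (hc : ∀ᵐ t ∂volume.restrict (Icc x y), c ≤ u' t) :
    c * (y - x) ≤ u y - u x := by
  rw [← intervalIntegral.integral_eq_sub_of_hasDerivAt (by rwa [uIcc_of_le hxy]) hu',
    mul_comm, ← smul_eq_mul, ← intervalIntegral.integral_const]
  exact intervalIntegral.integral_mono_ae_restrict hxy intervalIntegrable_const hu' hc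

theorem le_of_hasDerivAt_of_ae_nonneg_on_band {u u' : ℝ → ℝ} {x r c m : ℝ} (hcm : c < m)
    (hxr : x ≤ r) (hu : ∀ t ∈ Icc x r, HasDerivAt u (u' t) t)
    (hu' : IntervalIntegrable u' volume x r)
    (hband : ∀ᵐ t ∂volume.restrict (Icc x r), u t ∈ Icc c m → 0 ≤ u' t) (hx : m ≤ u x) :
    m ≤ u r := by
  by_contra! hr
  set S := {t ∈ Icc x r | m ≤ u t}
  have hcont : ContinuousOn u (Icc x r) := fun t ht => (hu t ht).continuousAt.continuousWithinAt
  have hSbdd : BddAbove S := ⟨r, fun t ht => ht.1.2⟩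
  set s := sSup S
  obtain ⟨hsI, hs⟩ : s ∈ S :=
    (hcont.preimage_isClosed_of_isClosed isClosed_Icc isClosed_Ici).csSup_mem
      ⟨x, left_mem_Icc.2 hxr, hx⟩ hSbdd
  -- after its last visit `s` to `[m, ∞)`, `u` stays below `m`, and above `c` for a while
  have hbelow : ∀ t ∈ Ioc s r, u t < m := fun t ht =>
    not_le.1 fun h => (le_csSup hSbdd ⟨⟨hsI.1.trans ht.1.le, ht.2⟩, h⟩).not_gt ht.1
  have hsr : s < r := hsI.2.lt_of_ne (by intro h; rw [h] at hs; linarith)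
  have hnear : {t | c < u t} ∩ Iic r ∈ 𝓝[≥] s :=
    nhdsWithin_le_nhds <| inter_mem
      ((hu s hsI).continuousAt.eventually (lt_mem_nhds (hcm.trans_le hs))) (Iic_mem_nhds hsr)
  obtain ⟨y, hsy, hy⟩ := mem_nhdsGE_iff_exists_Icc_subset.1 hnear
  have hsub : Icc s y ⊆ Icc x r := fun t ht => ⟨hsI.1.trans ht.1, (hy ht).2⟩
  have hmono := mul_sub_le_sub_of_hasDerivAt_of_ae_le hsy.le (fun t ht => hu t (hsub ht))
    (hu'.mono_set (by simpa [uIcc_of_le hxr, uIcc_of_le hsy.le] using hsub)) (c := 0) <| by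
    filter_upwards [ae_restrict_of_ae_restrict_of_subset hsub hband, Measure.ae_ne _ s,
      ae_restrict_mem measurableSet_Icc] with t ht hts hst
    exact ht ⟨(hy hst).1.le, (hbelow t ⟨hst.1.lt_of_ne' hts, (hy hst).2⟩).le⟩
  have := hbelow y ⟨hsy, (hy (right_mem_Icc.2 hsy.le)).2⟩
  linarith

theorem neg_le_of_hasDerivAt_linear {v g q : ℝ → ℝ} {x r κ K V : ℝ} (hxr : x ≤ r)
    (hv : ∀ t ∈ Icc x r, HasDerivAt v (g t - q t * v t) t)
    (hv' : IntervalIntegrable (fun t => g t - q t * v t) volume x r)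
    (hκ : 0 ≤ κ) (hq : ∀ t ∈ Icc x r, κ ≤ q t) (hg : ∀ᵐ t ∂volume.restrict (Icc x r), -K ≤ g t)
    (hV : 0 ≤ V) (hKV : K ≤ κ * V) (hx : -V ≤ v x) : -V ≤ v r := by
  refine le_of_hasDerivAt_of_ae_nonneg_on_band (c := -V - 1) (by linarith) hxr hv hv' ?_ hx
  filter_upwards [hg, ae_restrict_mem measurableSet_Icc] with t hgt ht hvt
  have : κ * V ≤ q t * -v t := mul_le_mul (hq t ht) (by linarith [hvt.2]) hV (hκ.trans (hq t ht))
  linarith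

theorem abs_le_of_hasDerivAt_linear {v g q : ℝ → ℝ} {x r κ K V : ℝ} (hxr : x ≤ r)
    (hv : ∀ t ∈ Icc x r, HasDerivAt v (g t - q t * v t) t)
    (hv' : IntervalIntegrable (fun t => g t - q t * v t) volume x r)
    (hκ : 0 ≤ κ) (hq : ∀ t ∈ Icc x r, κ ≤ q t) (hg : ∀ᵐ t ∂volume.restrict (Icc x r), |g t| ≤ K)
    (hKV : K ≤ κ * V) (hx : |v x| ≤ V) : |v r| ≤ V := by
  have hV : 0 ≤ V := (abs_nonneg _).trans hx
  refine abs_le.2 ⟨neg_le_of_hasDerivAt_linear hxr hv hv' hκ hq ?_ hV hKV (abs_le.1 hx).1, ?_⟩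
  · filter_upwards [hg] with t ht using (abs_le.1 ht).1
  · refine neg_le_neg_iff.1 (neg_le_of_hasDerivAt_linear (v := -v) (g := -g) hxr
      (fun t ht => ?_) ?_ hκ hq ?_ hV hKV (by simpa using (abs_le.1 hx).2))
    · exact (hv t ht).neg.congr_deriv (by simp only [Pi.neg_apply]; ring)
    · convert hv'.neg using 1
      ext t
      simp only [Pi.neg_apply]
      ring
    · filter_upwards [hg] with t ht using by simpa using (abs_le.1 ht).2

theorem intervalIntegrable_of_ae_abs_sub_le {f g : ℝ → ℝ} {c x y : ℝ} {s : Set ℝ}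
    (hf : Measurable f) (hg : Continuous g) (hfg : ∀ᵐ t ∂volume.restrict s, |f t - c| ≤ g t)
    (hs : uIoc x y ⊆ s) : IntervalIntegrable f volume x y := by
  have hbound : Continuous fun t => g t + |c| := by fun_prop
  refine (hbound.intervalIntegrable x y).mono_fun' hf.aestronglyMeasurable ?_
  filter_upwards [ae_restrict_of_ae_restrict_of_subset hs hfg] with t ht
  rw [Real.norm_eq_abs]
  linarith [abs_sub_abs_le_abs_sub (f t) c]

theorem exists_ae_le_of_abs_sub_le_mul_exp {f : ℝ → ℝ} {a J δ : ℝ} (ha : 0 < a) (hδ : 0 < δ)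
    (hfJ : ∀ᵐ t ∂volume.restrict (Ici 0), |f t - 1| ≤ J * exp (-a * t)) :
    ∃ R ≥ 0, ∀ᵐ t ∂volume.restrict (Ici R), 1 - δ ≤ f t := by
  have hJ : Tendsto (fun t => J * exp (-a * t)) atTop (𝓝 0) := by
    simpa [neg_mul] using
      (Real.tendsto_exp_neg_atTop_nhds_zero.comp (tendsto_id.const_mul_atTop ha)).const_mul J
  obtain ⟨R, hR⟩ := eventually_atTop.1 (hJ.eventually (gt_mem_nhds hδ))
  refine ⟨max R 0, le_max_right _ _, ?_⟩
  filter_upwards [ae_restrict_of_ae_restrict_of_subset (Ici_subset_Ici.2 (le_max_right _ _)) hfJ,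
    ae_restrict_mem measurableSet_Ici] with t ht htR
  linarith [(abs_le.1 ht).1, hR t ((le_max_left _ _).trans htR)]

section Riccati

variable {f lam : ℝ → ℝ}

theorem intervalIntegrable_riccati {x r : ℝ} (hxr : x ≤ r)
    (hlam : ∀ t ∈ Icc x r, HasDerivAt lam (f t - lam t ^ 2) t)
    (hf : IntervalIntegrable f volume x r) :
    IntervalIntegrable (fun t => f t - lam t ^ 2) volume x r :=
  hf.sub <| ContinuousOn.intervalIntegrable <| by
    rw [uIcc_of_le hxr]
    exact ContinuousOn.pow (fun t ht => (hlam t ht).continuousAt.continuousWithinAt) 2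

theorem riccati_le_of_sq_le {x r m : ℝ} (hm : 0 < m) (hxr : x ≤ r)
    (hlam : ∀ t ∈ Icc x r, HasDerivAt lam (f t - lam t ^ 2) t)
    (hf : IntervalIntegrable f volume x r)
    (hfm : ∀ᵐ t ∂volume.restrict (Icc x r), m ^ 2 ≤ f t) (hx : m ≤ lam x) : m ≤ lam r := by
  refine le_of_hasDerivAt_of_ae_nonneg_on_band hm hxr hlam (intervalIntegrable_riccati hxr hlam hf)
    ?_ hx
  filter_upwards [hfm] with t hft ht
  nlinarith [ht.1, ht.2]

theorem riccati_exists_ge {R θ δ : ℝ} (hδ : 0 < δ)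
    (hlam : ∀ t ≥ R, HasDerivAt lam (f t - lam t ^ 2) t)
    (hf : ∀ y ≥ R, IntervalIntegrable f volume R y) (hpos : ∀ t ≥ R, 0 ≤ lam t)
    (hfθ : ∀ᵐ t ∂volume.restrict (Ici R), θ ^ 2 + δ ≤ f t) : ∃ r ≥ R, θ ≤ lam r := by
  by_contra! h
  -- below `θ` the solution grows at rate at least `δ`
  set y := R + (θ - lam R) / δ
  have hy : R ≤ y := le_add_of_nonneg_right (div_nonneg (sub_nonneg.2 (h R le_rfl).le) hδ.le)
  have hgrowth := mul_sub_le_sub_of_hasDerivAt_of_ae_le hy (fun t ht => hlam t ht.1)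
    (intervalIntegrable_riccati hy (fun t ht => hlam t ht.1) (hf y hy)) (c := δ) <| by
    filter_upwards [ae_restrict_of_ae_restrict_of_subset Icc_subset_Ici_self hfθ,
      ae_restrict_mem measurableSet_Icc] with t hft ht
    nlinarith [h t ht.1, hpos t ht.1]
  have : δ * (y - R) = θ - lam R := by rw [add_sub_cancel_left]; field_simp
  linarith [h y hy]

theorem riccati_pos {R ε : ℝ} (hε : 0 < ε) (hlam : ∀ t ≥ R, HasDerivAt lam (f t - lam t ^ 2) t)
    (hf : ∀ y ≥ R, IntervalIntegrable f volume R y)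
    (hfε : ∀ᵐ t ∂volume.restrict (Ici R), ε < f t) (hR : 0 < lam R) : ∀ r ≥ R, 0 < lam r := by
  intro r hr
  have hm : 0 < min (lam R) √ε := lt_min hR (Real.sqrt_pos.2 hε)
  refine hm.trans_le (riccati_le_of_sq_le hm hr (fun t ht => hlam t ht.1) (hf r hr) ?_
    (min_le_left _ _))
  have hmε : min (lam R) √ε ^ 2 ≤ ε :=
    (pow_le_pow_left₀ hm.le (min_le_right _ _) 2).trans (Real.sq_sqrt hε.le).le
  filter_upwards [ae_restrict_of_ae_restrict_of_subset Icc_subset_Ici_self hfε] with t ht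
  linarith

theorem riccati_exists_forall_ge {R₀ θ δ : ℝ} (hθ : 0 < θ) (hδ : 0 < δ)
    (hlam : ∀ t ≥ R₀, HasDerivAt lam (f t - lam t ^ 2) t)
    (hf : ∀ x y, R₀ ≤ x → x ≤ y → IntervalIntegrable f volume x y) (hpos : ∀ t ≥ R₀, 0 ≤ lam t)
    (hfθ : ∀ᵐ t ∂volume.restrict (Ici R₀), θ ^ 2 + δ ≤ f t) : ∃ R ≥ R₀, ∀ r ≥ R, θ ≤ lam r := by
  obtain ⟨R, hR, hθR⟩ := riccati_exists_ge hδ hlam (fun y hy => hf R₀ y le_rfl hy) hpos hfθ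
  refine ⟨R, hR, fun r hr => riccati_le_of_sq_le hθ hr (fun t ht => hlam t (hR.trans ht.1))
    (hf R r hR hr) ?_ hθR⟩
  filter_upwards [ae_restrict_of_ae_restrict_of_subset
    (Icc_subset_Ici_self.trans (Ici_subset_Ici.2 hR)) hfθ] with t ht
  linarith

theorem riccati_abs_sub_one_mul_exp_le {a J θ R r : ℝ} (hRr : R ≤ r) (haθ : a < θ + 1)
    (hlam : ∀ t ∈ Icc R r, HasDerivAt lam (f t - lam t ^ 2) t)
    (hf : IntervalIntegrable f volume R r) (hθ : ∀ t ∈ Icc R r, θ ≤ lam t)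
    (hfJ : ∀ᵐ t ∂volume.restrict (Icc R r), |f t - 1| ≤ J * exp (-a * t)) :
    |(lam r - 1) * exp (a * r)| ≤
      max |(lam R - 1) * exp (a * R)| (J / (θ + 1 - a)) := by
  have hκ : 0 < θ + 1 - a := by linarith
  have hcont : ContinuousOn lam (Icc R r) := fun t ht => (hlam t ht).continuousAt.continuousWithinAt
  refine abs_le_of_hasDerivAt_linear (v := fun t => (lam t - 1) * exp (a * t))
    (g := fun t => (f t - 1) * exp (a * t)) (q := fun t => lam t + 1 - a) (K := J) hRr
    (fun t ht => ?_) ?_ hκ.le (fun t ht => by linarith [hθ t ht]) ?_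
    ((div_le_iff₀' hκ).1 (le_max_right _ _)) (le_max_left _ _)
  · exact (((hlam t ht).sub_const 1).mul ((hasDerivAt_id t).const_mul a).exp).congr_deriv
      (by simp only [id]; ring)
  · rw [← uIcc_of_le hRr] at hcont
    exact ((hf.sub intervalIntegrable_const).mul_continuousOn (by fun_prop)).sub
      (ContinuousOn.intervalIntegrable (by fun_prop))
  · filter_upwards [hfJ] with t ht
    rw [abs_mul, abs_of_pos (exp_pos _)]
    calc |f t - 1| * exp (a * t) ≤ J * exp (-a * t) * exp (a * t) := by gcongr
      _ = J := by rw [mul_assoc, ← exp_add]; simp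

end Riccati

theorem riccati_decay_a_lt_two_general
    (a J ε : ℝ) (ha : 0 < a) (ha2 : a < 2) (hε : 0 < ε)
    (f lam : ℝ → ℝ)
    (hf_meas : Measurable f)
    (hf_pos : ∀ᵐ r ∂(volume.restrict (Ici (0:ℝ))), ε < f r)
    (hf_close : ∀ᵐ r ∂(volume.restrict (Ici (0:ℝ))), |f r - 1| ≤ J * exp (-a * r))
    (hlam : ∀ r ≥ (0:ℝ), HasDerivAt lam (f r - lam r ^ 2) r)
    (h0 : 0 < lam 0) :
    (∀ r ≥ (0:ℝ), 0 < lam r) ∧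
      ∃ C > 0, ∀ r > (0:ℝ), |lam r - 1| ≤ C * exp (-a * r) := by
  have hf : ∀ x y, 0 ≤ x → x ≤ y → IntervalIntegrable f volume x y := fun x y hx hxy =>
    intervalIntegrable_of_ae_abs_sub_le hf_meas (by fun_prop) hf_close
      (by rw [uIoc_of_le hxy]; exact Ioc_subset_Icc_self.trans ((Icc_subset_Ici_iff hxy).2 hx))
  have hpos := riccati_pos hε hlam (fun y hy => hf 0 y le_rfl hy) hf_pos h0
  obtain ⟨θ, hθa, hθ1⟩ := exists_between (max_lt (by linarith) one_pos : max (a - 1) 0 < 1)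
  have hθ : 0 < θ := (le_max_right _ _).trans_lt hθa
  have hδ : 0 < (1 - θ ^ 2) / 2 := by nlinarith
  obtain ⟨R₀, hR₀, hfR₀⟩ := exists_ae_le_of_abs_sub_le_mul_exp ha hδ hf_close
  obtain ⟨R, hR, hθR⟩ := riccati_exists_forall_ge hθ hδ (fun t ht => hlam t (hR₀.trans ht))
    (fun x y hx => hf x y (hR₀.trans hx)) (fun t ht => (hpos t (hR₀.trans ht)).le)
    (by filter_upwards [hfR₀] with t ht; linarith)
  have hR0 : 0 ≤ R := hR₀.trans hR
  set v := fun r => (lam r - 1) * exp (a * r)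
  have hv : ∀ r ≥ R, |v r| ≤ max |v R| (J / (θ + 1 - a)) := fun r hr =>
    riccati_abs_sub_one_mul_exp_le hr (by linarith [le_max_left (a - 1) 0])
      (fun t ht => hlam t (hR0.trans ht.1)) (hf R r hR0 hr) (fun t ht => hθR t ht.1)
      (ae_restrict_of_ae_restrict_of_subset (Icc_subset_Ici_self.trans (Ici_subset_Ici.2 hR0))
        hf_close)
  obtain ⟨K, hK⟩ := isCompact_Icc.exists_bound_of_continuousOn (f := v) (s := Icc 0 R)
    fun t ht => (((hlam t ht.1).continuousAt.sub continuousAt_const).mul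
      (by fun_prop : ContinuousAt (fun r => exp (a * r)) t)).continuousWithinAt
  refine ⟨hpos, max K (max |v R| (J / (θ + 1 - a))) + 1, by positivity, fun r hr => ?_⟩
  have hvr : |v r| ≤ max K (max |v R| (J / (θ + 1 - a))) := by
    rcases le_total r R with h | h
    · exact (hK r ⟨hr.le, h⟩).trans (le_max_left _ _)
    · exact (hv r h).trans (le_max_right _ _)
  calc |lam r - 1| = |v r| * exp (-a * r) := by
        rw [abs_mul, abs_of_pos (exp_pos _), mul_assoc, ← exp_add]; simp
    _ ≤ _ := by gcongr; linarith

/-- Lemma on the scalar Riccati equation, case `0 < a < 2`: if `f` is bounded, measurable,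
`f > ε` a.e. and `|f - 1| ≤ J e^{-ar}` a.e. on `[0,∞)`, and `λ' + λ² = f` with `λ(0) > 0`,
then `λ` is positive and `|λ - 1| ≤ C e^{-ar}`. -/
theorem riccati_decay_a_lt_two
    (a J ε : ℝ) (ha : 0 < a) (ha2 : a < 2) (hJ : 0 < J) (hε : 0 < ε)
    (f lam : ℝ → ℝ)
    (hf_meas : Measurable f)
    (hf_bdd : ∃ M : ℝ, ∀ r ≥ (0:ℝ), |f r| ≤ M)
    (hf_pos : ∀ᵐ r ∂(volume.restrict (Ici (0:ℝ))), ε < f r)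
    (hf_close : ∀ᵐ r ∂(volume.restrict (Ici (0:ℝ))), |f r - 1| ≤ J * exp (-a * r))
    (hlam : ∀ r ≥ (0:ℝ), HasDerivAt lam (f r - lam r ^ 2) r)
    (h0 : 0 < lam 0) :
    (∀ r ≥ (0:ℝ), 0 < lam r) ∧
      ∃ C > 0, ∀ r > (0:ℝ), |lam r - 1| ≤ C * exp (-a * r) :=
  riccati_decay_a_lt_two_general a J ε ha ha2 hε f lam hf_meas hf_pos hf_close hlam h0
end

section
/- Let f be a bounded measurable function on [0,∞) with f > ε almost everywhere for some ε > 0, and |f(r) − 1| ≤ J e^{−2r} almost everywhere for a constant J > 0. If λ solves λ' + λ² = f with λ(0) > 0, then λ is positive and there exists C > 0 depending only on J and λ(0) such that |λ(r) − 1| ≤ C (r+1) e^{−2r} for all r > 0. -/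
/-!
With `u = λ - 1` the equation is linear, `u' = (f - 1) - (λ + 1) u`, so for the integrating factor
`Φ r = exp ∫₀ʳ (λ + 1)` one has `(u Φ)' = Φ (f - 1)` and
`|u r| Φ r ≤ |u 0| + J ∫₀ʳ Φ(t) e^{-2t} dt`. Positivity comes the same way from
`(λ exp ∫₀ʳ λ)' = f exp ∫₀ʳ λ ≥ 0`. Since `λ > 0`, `Φ t ≤ e^{t-r} Φ r`, which yields
`|u| ≲ e^{-r}`. Fed back in, `λ + 1 ≥ 2 - C e^{-t}` gives `Φ t ≤ e^C e^{2(t-r)} Φ r`; the forcing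
`J e^{-2t}` now resonates with the rate `2` of `Φ`, and its integral contributes `J r e^{-2r}`.
-/

open MeasureTheory Real Set

noncomputable def integratingFactor (c : ℝ → ℝ) (r : ℝ) : ℝ :=
  exp (∫ t in (0:ℝ)..r, c t)

section IntegratingFactor

variable {c : ℝ → ℝ}

theorem integratingFactor_pos (c : ℝ → ℝ) (r : ℝ) : 0 < integratingFactor c r :=
  exp_pos _

@[simp]
theorem integratingFactor_zero (c : ℝ → ℝ) : integratingFactor c 0 = 1 := by
  simp [integratingFactor]

theorem hasDerivAt_integratingFactor (hc : Continuous c) (r : ℝ) :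
    HasDerivAt (integratingFactor c) (c r * integratingFactor c r) r := by
  rw [mul_comm]
  exact (hc.integral_hasStrictDerivAt 0 r).hasDerivAt.exp

theorem continuous_integratingFactor (hc : Continuous c) : Continuous (integratingFactor c) :=
  continuous_iff_continuousAt.2 fun r => (hasDerivAt_integratingFactor hc r).continuousAt

theorem integratingFactor_eq_mul_exp (hc : Continuous c) (t r : ℝ) :
    integratingFactor c r = integratingFactor c t * exp (∫ s in t..r, c s) := by
  rw [integratingFactor, integratingFactor, ← exp_add,
    intervalIntegral.integral_add_adjacent_intervals (hc.intervalIntegrable _ _)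
      (hc.intervalIntegrable _ _)]

theorem integratingFactor_le_of_le_integral (hc : Continuous c) {a L t r : ℝ}
    (h : a * (r - t) - L ≤ ∫ s in t..r, c s) :
    integratingFactor c t ≤ exp L * exp (-(a * r)) * exp (a * t) * integratingFactor c r := by
  rw [integratingFactor_eq_mul_exp hc t r,
    show exp L * exp (-(a * r)) * exp (a * t) * (integratingFactor c t * exp (∫ s in t..r, c s))
      = integratingFactor c t * exp (L + -(a * r) + a * t + ∫ s in t..r, c s) by
      simp only [exp_add]; ring]
  exact le_mul_of_one_le_right (integratingFactor_pos c t).le (one_le_exp (by linarith))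

theorem mul_integratingFactor_eq {u g : ℝ → ℝ} (hc : Continuous c)
    (hu : ∀ t ≥ 0, HasDerivAt u (g t - c t * u t) t) {r : ℝ} (hr : 0 ≤ r)
    (hg : IntervalIntegrable g volume 0 r) :
    u r * integratingFactor c r = u 0 + ∫ t in (0:ℝ)..r, integratingFactor c t * g t := by
  have hderiv : ∀ t ∈ uIcc 0 r,
      HasDerivAt (fun s => u s * integratingFactor c s) (integratingFactor c t * g t) t := by
    intro t ht
    rw [uIcc_of_le hr] at ht
    exact ((hu t ht.1).mul (hasDerivAt_integratingFactor hc t)).congr_deriv (by ring)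
  rw [intervalIntegral.integral_eq_sub_of_hasDerivAt hderiv
    (hg.continuousOn_mul (continuous_integratingFactor hc).continuousOn)]
  simp

theorem abs_le_of_linear_ode_of_integral_ge {u g w : ℝ → ℝ} {a L r : ℝ} (hc : Continuous c)
    (hw : Continuous w) (hu : ∀ t ≥ 0, HasDerivAt u (g t - c t * u t) t) (hr : 0 ≤ r)
    (hg : IntervalIntegrable g volume 0 r)
    (hgw : ∀ᵐ t ∂(volume.restrict (Ici 0)), |g t| ≤ w t)
    (hcL : ∀ t ∈ Icc 0 r, a * (r - t) - L ≤ ∫ s in t..r, c s) :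
    |u r| ≤ exp L * exp (-(a * r)) * (|u 0| + ∫ t in (0:ℝ)..r, exp (a * t) * w t) := by
  set Φ := integratingFactor c
  set E := exp L * exp (-(a * r))
  have hΦ_cont : Continuous Φ := continuous_integratingFactor hc
  have hgw' : ∀ᵐ t ∂(volume.restrict (Icc 0 r)), |g t| ≤ w t :=
    ae_restrict_of_ae_restrict_of_subset (fun t ht => ht.1) hgw
  have h_abs : |∫ t in (0:ℝ)..r, Φ t * g t| ≤ ∫ t in (0:ℝ)..r, Φ t * w t := by
    rw [← Real.norm_eq_abs]
    refine intervalIntegral.norm_integral_le_of_norm_le hr ?_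
      ((hΦ_cont.mul hw).intervalIntegrable (μ := volume) _ _)
    rw [← ae_restrict_iff' measurableSet_Ioc]
    filter_upwards [ae_restrict_of_ae_restrict_of_subset (fun t ht => ht.1.le) hgw] with t ht
    rw [Real.norm_eq_abs, abs_mul, abs_of_pos (integratingFactor_pos c t)]
    exact mul_le_mul_of_nonneg_left ht (integratingFactor_pos c t).le
  have h_weight :
      ∫ t in (0:ℝ)..r, Φ t * w t ≤ E * Φ r * ∫ t in (0:ℝ)..r, exp (a * t) * w t := by
    rw [← intervalIntegral.integral_const_mul]
    refine intervalIntegral.integral_mono_ae_restrict hr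
      ((hΦ_cont.mul hw).intervalIntegrable (μ := volume) _ _)
      (Continuous.intervalIntegrable (by fun_prop) _ _) ?_
    filter_upwards [hgw', ae_restrict_mem measurableSet_Icc] with t hgt ht
    calc Φ t * w t ≤ (E * exp (a * t) * Φ r) * w t :=
          mul_le_mul_of_nonneg_right (integratingFactor_le_of_le_integral hc (hcL t ht))
            ((abs_nonneg _).trans hgt)
      _ = E * Φ r * (exp (a * t) * w t) := by ring
  have h_one : 1 ≤ E * Φ r := by
    simpa using integratingFactor_le_of_le_integral hc (hcL 0 ⟨le_rfl, hr⟩)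
  have h_mul : |u r| * Φ r ≤ E * (|u 0| + ∫ t in (0:ℝ)..r, exp (a * t) * w t) * Φ r :=
    calc |u r| * Φ r = |u 0 + ∫ t in (0:ℝ)..r, Φ t * g t| := by
          rw [← mul_integratingFactor_eq hc hu hr hg, abs_mul,
            abs_of_pos (integratingFactor_pos c r)]
      _ ≤ |u 0| + ∫ t in (0:ℝ)..r, Φ t * w t :=
          (abs_add_le _ _).trans (add_le_add_right h_abs _)
      _ ≤ |u 0| * (E * Φ r) + E * Φ r * ∫ t in (0:ℝ)..r, exp (a * t) * w t :=
          add_le_add (le_mul_of_one_le_right (abs_nonneg _) h_one) h_weight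
      _ = E * (|u 0| + ∫ t in (0:ℝ)..r, exp (a * t) * w t) * Φ r := by ring
  exact le_of_mul_le_mul_right h_mul (integratingFactor_pos c r)

end IntegratingFactor

theorem ContinuousOn.continuous_comp_max {α β : Type*} [TopologicalSpace α] [LinearOrder α]
    [OrderClosedTopology α] [TopologicalSpace β] {g : α → β} {a : α}
    (hg : ContinuousOn g (Ici a)) :
    Continuous fun x => g (max x a) :=
  hg.comp_continuous (continuous_id.max continuous_const) fun x => le_max_right x a

theorem intervalIntegrable_of_ae_abs_le {g w : ℝ → ℝ} {a b : ℝ} (hg : Measurable g)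
    (hw : Continuous w) (hab : a ≤ b) (h : ∀ᵐ t ∂(volume.restrict (Ici a)), |g t| ≤ w t) :
    IntervalIntegrable g volume a b := by
  refine (hw.intervalIntegrable a b).mono_fun' hg.aestronglyMeasurable.restrict ?_
  rw [uIoc_of_le hab]
  exact ae_restrict_of_ae_restrict_of_subset (fun t ht => ht.1.le) h

theorem integral_exp_neg_le_one {t : ℝ} (ht : 0 ≤ t) (r : ℝ) : ∫ s in t..r, exp (-s) ≤ 1 := by
  rw [intervalIntegral.integral_comp_neg, integral_exp]
  linarith [exp_pos (-r), exp_le_one_iff.2 (neg_nonpos.2 ht)]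

section Riccati

variable {f lam : ℝ → ℝ}

/-- The coefficient `λ (max · 0) + k` is a continuous extension of `λ + k` to all of `ℝ`, as the
integrating factor requires; `λ` itself is arbitrary on `(-∞, 0)`. -/
theorem riccati_hasDerivAt_sub (hlam : ∀ r ≥ 0, HasDerivAt lam (f r - lam r ^ 2) r) (k : ℝ) :
    ∀ r ≥ 0, HasDerivAt (fun t => lam t - k)
      ((f r - k ^ 2) - (lam (max r 0) + k) * (lam r - k)) r := fun r hr =>
  ((hlam r hr).sub_const k).congr_deriv (by rw [max_eq_left hr]; ring)

theorem riccati_continuous_coeff (hlam : ∀ r ≥ 0, HasDerivAt lam (f r - lam r ^ 2) r) (k : ℝ) :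
    Continuous fun t => lam (max t 0) + k :=
  (ContinuousOn.continuous_comp_max fun r hr =>
    (hlam r hr).continuousAt.continuousWithinAt).add continuous_const

theorem riccati_pos_s1 (hlam : ∀ r ≥ 0, HasDerivAt lam (f r - lam r ^ 2) r)
    (hf_nonneg : ∀ᵐ r ∂(volume.restrict (Ici 0)), 0 ≤ f r) (h0 : 0 < lam 0) {r : ℝ}
    (hr : 0 ≤ r) (hf : IntervalIntegrable f volume 0 r) : 0 < lam r := by
  have hc := riccati_continuous_coeff hlam 0
  set Φ := integratingFactor fun t => lam (max t 0) + 0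
  have key :=
    mul_integratingFactor_eq hc (riccati_hasDerivAt_sub hlam 0) hr (by simpa using hf)
  have hint : 0 ≤ ∫ t in (0:ℝ)..r, Φ t * (f t - 0 ^ 2) := by
    refine intervalIntegral.integral_nonneg_of_ae_restrict hr ?_
    filter_upwards [ae_restrict_of_ae_restrict_of_subset (fun t ht => ht.1) hf_nonneg] with t ht
    simpa using mul_nonneg (integratingFactor_pos _ t).le ht
  rw [sub_zero, sub_zero] at key
  exact (mul_pos_iff_of_pos_right (integratingFactor_pos _ r)).1 (by linarith)

theorem riccati_abs_sub_one_le_exp_neg {J : ℝ} (hJ : 0 ≤ J)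
    (hlam : ∀ r ≥ 0, HasDerivAt lam (f r - lam r ^ 2) r) (hpos : ∀ r ≥ 0, 0 < lam r)
    (hf_close : ∀ᵐ r ∂(volume.restrict (Ici 0)), |f r - 1| ≤ J * exp (-2 * r)) {r : ℝ}
    (hr : 0 ≤ r) (hf : IntervalIntegrable f volume 0 r) :
    |lam r - 1| ≤ (|lam 0 - 1| + J) * exp (-r) := by
  have hc := riccati_continuous_coeff hlam 1
  have hcL : ∀ t ∈ Icc 0 r, 1 * (r - t) - 0 ≤ ∫ s in t..r, (lam (max s 0) + 1) := by
    intro t ht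
    have := intervalIntegral.integral_mono_on ht.2 (intervalIntegrable_const (μ := volume))
      (hc.intervalIntegrable t r) fun s _ => le_add_of_nonneg_left (hpos _ (le_max_right s 0)).le
    simpa using this
  have h := abs_le_of_linear_ode_of_integral_ge (w := fun t => J * exp (-2 * t)) hc (by fun_prop)
    (riccati_hasDerivAt_sub hlam 1) hr (by simpa using hf.sub intervalIntegrable_const)
    (by simpa using hf_close) hcL
  have hweight : ∫ t in (0:ℝ)..r, exp (1 * t) * (J * exp (-2 * t)) ≤ J := by
    have hexp : ∀ t : ℝ, exp (1 * t) * (J * exp (-2 * t)) = J * exp (-t) := fun t => by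
      rw [mul_left_comm, ← exp_add]; ring_nf
    simp only [hexp, intervalIntegral.integral_const_mul]
    exact mul_le_of_le_one_right hJ (integral_exp_neg_le_one le_rfl r)
  calc |lam r - 1| ≤ exp 0 * exp (-(1 * r)) *
        (|lam 0 - 1| + ∫ t in (0:ℝ)..r, exp (1 * t) * (J * exp (-2 * t))) := h
    _ ≤ exp (-r) * (|lam 0 - 1| + J) := by rw [exp_zero, one_mul, one_mul]; gcongr
    _ = (|lam 0 - 1| + J) * exp (-r) := mul_comm _ _

theorem riccati_abs_sub_one_le_of_exp_neg {J C : ℝ}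
    (hlam : ∀ r ≥ 0, HasDerivAt lam (f r - lam r ^ 2) r)
    (hf_close : ∀ᵐ r ∂(volume.restrict (Ici 0)), |f r - 1| ≤ J * exp (-2 * r))
    (h_decay : ∀ t ≥ 0, |lam t - 1| ≤ C * exp (-t)) {r : ℝ} (hr : 0 ≤ r)
    (hf : IntervalIntegrable f volume 0 r) :
    |lam r - 1| ≤ exp C * (|lam 0 - 1| + J * r) * exp (-2 * r) := by
  have hC : 0 ≤ C := (abs_nonneg _).trans (by simpa using h_decay 0 le_rfl)
  have hc := riccati_continuous_coeff hlam 1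
  have hcL : ∀ t ∈ Icc 0 r, 2 * (r - t) - C ≤ ∫ s in t..r, (lam (max s 0) + 1) := by
    intro t ht
    have hlower : ∀ s ∈ Icc t r, 2 - C * exp (-s) ≤ lam (max s 0) + 1 := fun s hs => by
      have hs0 : 0 ≤ s := ht.1.trans hs.1
      rw [max_eq_left hs0]
      linarith [(abs_le.1 (h_decay s hs0)).1]
    calc 2 * (r - t) - C ≤ ∫ s in t..r, (2 - C * exp (-s)) := by
          rw [intervalIntegral.integral_sub intervalIntegrable_const
            (Continuous.intervalIntegrable (by fun_prop) _ _),
            intervalIntegral.integral_const, intervalIntegral.integral_const_mul, smul_eq_mul]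
          nlinarith [integral_exp_neg_le_one ht.1 r]
      _ ≤ ∫ s in t..r, (lam (max s 0) + 1) :=
          intervalIntegral.integral_mono_on ht.2 (Continuous.intervalIntegrable (by fun_prop) _ _)
            (hc.intervalIntegrable t r) hlower
  have h := abs_le_of_linear_ode_of_integral_ge (w := fun t => J * exp (-2 * t)) hc (by fun_prop)
    (riccati_hasDerivAt_sub hlam 1) hr (by simpa using hf.sub intervalIntegrable_const)
    (by simpa using hf_close) hcL
  have hweight : ∫ t in (0:ℝ)..r, exp (2 * t) * (J * exp (-2 * t)) = J * r := by
    have hexp : ∀ t : ℝ, exp (2 * t) * (J * exp (-2 * t)) = J := fun t => by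
      rw [mul_left_comm, ← exp_add]; simp
    simp only [hexp, intervalIntegral.integral_const, smul_eq_mul]
    ring
  calc |lam r - 1| ≤ exp C * exp (-(2 * r)) *
        (|lam 0 - 1| + ∫ t in (0:ℝ)..r, exp (2 * t) * (J * exp (-2 * t))) := h
    _ = exp C * (|lam 0 - 1| + J * r) * exp (-2 * r) := by rw [hweight, neg_mul]; ring

end Riccati

theorem riccati_decay_a_eq_two_general
    (J ε : ℝ) (hJ : 0 < J) (hε : 0 < ε)
    (f lam : ℝ → ℝ)
    (hf_meas : Measurable f)
    (hf_pos : ∀ᵐ r ∂(volume.restrict (Ici (0:ℝ))), ε < f r)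
    (hf_close : ∀ᵐ r ∂(volume.restrict (Ici (0:ℝ))), |f r - 1| ≤ J * exp (-2 * r))
    (hlam : ∀ r ≥ (0:ℝ), HasDerivAt lam (f r - lam r ^ 2) r)
    (h0 : 0 < lam 0) :
    (∀ r ≥ (0:ℝ), 0 < lam r) ∧
      ∃ C > 0, ∀ r > (0:ℝ), |lam r - 1| ≤ C * (r + 1) * exp (-2 * r) := by
  have hf : ∀ r ≥ 0, IntervalIntegrable f volume 0 r := fun r hr => by
    simpa using (intervalIntegrable_of_ae_abs_le (hf_meas.sub measurable_const)
      (by fun_prop) hr hf_close).add (intervalIntegrable_const (c := (1:ℝ)))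
  have hpos : ∀ r ≥ 0, 0 < lam r := fun r hr =>
    riccati_pos_s1 hlam (hf_pos.mono fun _ h => (hε.trans h).le) h0 hr (hf r hr)
  set C := |lam 0 - 1| + J
  have hC : 0 < C := by positivity
  refine ⟨hpos, exp C * C, by positivity, fun r hr => ?_⟩
  have h_rate_one : ∀ t ≥ 0, |lam t - 1| ≤ C * exp (-t) := fun t ht =>
    riccati_abs_sub_one_le_exp_neg hJ.le hlam hpos hf_close ht (hf t ht)
  calc |lam r - 1| ≤ exp C * (|lam 0 - 1| + J * r) * exp (-2 * r) :=
        riccati_abs_sub_one_le_of_exp_neg hlam hf_close h_rate_one hr.le (hf r hr.le)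
    _ ≤ exp C * (C * (r + 1)) * exp (-2 * r) := by
        gcongr
        nlinarith [abs_nonneg (lam 0 - 1)]
    _ = exp C * C * (r + 1) * exp (-2 * r) := by ring

/-- Lemma on the scalar Riccati equation, borderline case `a = 2`: if `f` is bounded, measurable,
`f > ε` a.e. and `|f - 1| ≤ J e^{-2r}` a.e. on `[0,∞)`, and `λ' + λ² = f` with `λ(0) > 0`,
then `λ` is positive and `|λ - 1| ≤ C (r+1) e^{-2r}`. -/
theorem riccati_decay_a_eq_two
    (J ε : ℝ) (hJ : 0 < J) (hε : 0 < ε)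
    (f lam : ℝ → ℝ)
    (hf_meas : Measurable f)
    (hf_bdd : ∃ M : ℝ, ∀ r ≥ (0:ℝ), |f r| ≤ M)
    (hf_pos : ∀ᵐ r ∂(volume.restrict (Ici (0:ℝ))), ε < f r)
    (hf_close : ∀ᵐ r ∂(volume.restrict (Ici (0:ℝ))), |f r - 1| ≤ J * exp (-2 * r))
    (hlam : ∀ r ≥ (0:ℝ), HasDerivAt lam (f r - lam r ^ 2) r)
    (h0 : 0 < lam 0) :
    (∀ r ≥ (0:ℝ), 0 < lam r) ∧
      ∃ C > 0, ∀ r > (0:ℝ), |lam r - 1| ≤ C * (r + 1) * exp (-2 * r) :=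
  riccati_decay_a_eq_two_general J ε hJ hε f lam hf_meas hf_pos hf_close hlam h0
end

section
/- Suppose λ solves λ' + λ² = f on [0,∞) with λ(0) > μ, where f > 2μ² almost everywhere for some μ > 0. Then λ(r) > μ for all r ≥ 0. -/
/-!
Let `t > 0` be the first time at which `λ` drops to `μ`. On a short interval `[a, t]` before it,
`μ < λ < √2 μ`, so `λ' = f - λ² > 0` almost everywhere there. Being a derivative, `λ'` is
measurable, and bounded because `f` is, hence integrable; so the fundamental theorem of calculus
gives `λ a ≤ λ t ≤ μ < λ a`.
-/

open MeasureTheory Real Set Filter Topology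

theorem intervalIntegrable_of_hasDerivAt_of_norm_le {E : Type*} [NormedAddCommGroup E]
    [NormedSpace ℝ E] [CompleteSpace E] {g g' : ℝ → E} {a b C : ℝ}
    (hderiv : ∀ x ∈ uIcc a b, HasDerivAt g (g' x) x) (hC : ∀ x ∈ uIcc a b, ‖g' x‖ ≤ C) :
    IntervalIntegrable g' volume a b := by
  have h_on : ∀ p : ℝ → Prop, (∀ x ∈ uIcc a b, p x) → ∀ᵐ x ∂volume.restrict (uIoc a b), p x :=
    fun p hp => (ae_restrict_iff' measurableSet_uIoc).2 <|
      ae_of_all _ fun x hx => hp x (uIoc_subset_uIcc hx)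
  refine intervalIntegrable_const.mono_fun' ?_ (h_on _ hC)
  exact (aestronglyMeasurable_deriv g _).congr (h_on _ fun x hx => (hderiv x hx).deriv)

theorem le_of_hasDerivAt_of_ae_nonneg {g g' : ℝ → ℝ} {a b : ℝ} (hab : a ≤ b)
    (hderiv : ∀ x ∈ Icc a b, HasDerivAt g (g' x) x) (hint : IntervalIntegrable g' volume a b)
    (hnonneg : ∀ᵐ x, x ∈ Ioo a b → 0 ≤ g' x) : g a ≤ g b := by
  have hftc : ∫ x in a..b, g' x = g b - g a :=
    intervalIntegral.integral_eq_sub_of_hasDerivAt (by rwa [uIcc_of_le hab]) hint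
  have hpos : 0 ≤ ∫ x in a..b, g' x :=
    intervalIntegral.integral_nonneg_of_ae_restrict hab <|
      (ae_restrict_congr_set Ioo_ae_eq_Icc).1 ((ae_restrict_iff' measurableSet_Ioo).2 hnonneg)
  linarith

theorem exists_first_le_of_continuousOn {g : ℝ → ℝ} {a b c : ℝ} (hab : a ≤ b)
    (hg : ContinuousOn g (Icc a b)) (ha : c < g a) (hb : g b ≤ c) :
    ∃ t ∈ Ioc a b, g t ≤ c ∧ ∀ s ∈ Ico a t, c < g s := by
  set T := Icc a b ∩ g ⁻¹' Iic c
  have hT_closed : IsClosed T := hg.preimage_isClosed_of_isClosed isClosed_Icc isClosed_Iic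
  have hT_bdd : BddBelow T := ⟨a, fun x hx => hx.1.1⟩
  have hT_inf : sInf T ∈ T := hT_closed.csInf_mem ⟨b, ⟨hab, le_rfl⟩, hb⟩ hT_bdd
  refine ⟨sInf T, ⟨hT_inf.1.1.lt_of_ne ?_, hT_inf.1.2⟩, hT_inf.2, fun s hs => ?_⟩
  · intro h
    exact ha.not_ge (h ▸ hT_inf.2)
  · by_contra! hgs
    exact hs.2.not_ge (csInf_le hT_bdd ⟨⟨hs.1, hs.2.le.trans hT_inf.1.2⟩, hgs⟩)

theorem riccati_intervalIntegrable {f lam : ℝ → ℝ} (hf_bdd : ∃ M : ℝ, ∀ r ≥ (0:ℝ), |f r| ≤ M)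
    (hlam : ∀ r ≥ (0:ℝ), HasDerivAt lam (f r - lam r ^ 2) r) {a b : ℝ} (ha : 0 ≤ a) (hb : 0 ≤ b) :
    IntervalIntegrable (fun r => f r - lam r ^ 2) volume a b := by
  have hnonneg : ∀ x ∈ uIcc a b, 0 ≤ x := fun x hx => (le_min ha hb).trans hx.1
  obtain ⟨M, hM⟩ := hf_bdd
  obtain ⟨K, hK⟩ := isCompact_uIcc.exists_bound_of_continuousOn
    (fun x hx => ((hlam x (hnonneg x hx)).continuousAt.pow 2).continuousWithinAt)
  refine intervalIntegrable_of_hasDerivAt_of_norm_le (C := M + K)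
    (fun x hx => hlam x (hnonneg x hx)) fun x hx => ?_
  calc ‖f x - lam x ^ 2‖ ≤ ‖f x‖ + ‖lam x ^ 2‖ := norm_sub_le _ _
    _ ≤ M + K := add_le_add (hM x (hnonneg x hx)) (hK x hx)

theorem riccati_positive_general
    (μ : ℝ) (hμ : 0 < μ)
    (f lam : ℝ → ℝ)
    (hf_bdd : ∃ M : ℝ, ∀ r ≥ (0:ℝ), |f r| ≤ M)
    (hf : ∀ᵐ r ∂(volume.restrict (Ici (0:ℝ))), 2 * μ ^ 2 < f r)
    (hlam : ∀ r ≥ (0:ℝ), HasDerivAt lam (f r - lam r ^ 2) r)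
    (h0 : μ < lam 0) :
    ∀ r ≥ (0:ℝ), μ < lam r := by
  intro r hr
  by_contra! hr_le
  obtain ⟨t, ⟨ht0, -⟩, hlamt, hbefore⟩ := exists_first_le_of_continuousOn hr
    (fun x hx => (hlam x hx.1).continuousAt.continuousWithinAt) h0 hr_le
  have hlamt_lt : lam t < √2 * μ := hlamt.trans_lt (lt_mul_of_one_lt_left hμ one_lt_sqrt_two)
  obtain ⟨a, ⟨ha0, hat⟩, hbelow⟩ := (mem_nhdsLT_iff_exists_mem_Ico_Ioo_subset ht0).1 <|
    nhdsWithin_le_nhds <| (hlam t ht0.le).continuousAt.eventually_lt continuousAt_const hlamt_lt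
  have hderiv_nonneg : ∀ᵐ s, s ∈ Ioo a t → 0 ≤ f s - lam s ^ 2 := by
    filter_upwards [(ae_restrict_iff' measurableSet_Ici).1 hf] with s hfs hs
    have hμs : μ < lam s := hbefore s ⟨ha0.trans hs.1.le, hs.2⟩
    have hsq : lam s ^ 2 < 2 * μ ^ 2 :=
      calc lam s ^ 2 < (√2 * μ) ^ 2 := pow_lt_pow_left₀ (hbelow hs) (by linarith) two_ne_zero
        _ = 2 * μ ^ 2 := by rw [mul_pow, sq_sqrt zero_le_two]
    linarith [hfs (ha0.trans hs.1.le)]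
  have hmono : lam a ≤ lam t := le_of_hasDerivAt_of_ae_nonneg hat.le
    (fun x hx => hlam x (ha0.trans hx.1)) (riccati_intervalIntegrable hf_bdd hlam ha0 ht0.le)
    hderiv_nonneg
  linarith [hbefore a ⟨ha0, hat⟩]

/-- Positivity for the scalar Riccati equation: if `λ' + λ² = f` on `[0,∞)` with
`f > 2μ²` a.e. for some `μ > 0` and `λ(0) > μ`, then `λ(r) > μ` for all `r ≥ 0`. -/
theorem riccati_positive
    (μ : ℝ) (hμ : 0 < μ)
    (f lam : ℝ → ℝ)
    (hf_meas : Measurable f)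
    (hf_bdd : ∃ M : ℝ, ∀ r ≥ (0:ℝ), |f r| ≤ M)
    (hf : ∀ᵐ r ∂(volume.restrict (Ici (0:ℝ))), 2 * μ ^ 2 < f r)
    (hlam : ∀ r ≥ (0:ℝ), HasDerivAt lam (f r - lam r ^ 2) r)
    (h0 : μ < lam 0) :
    ∀ r ≥ (0:ℝ), μ < lam r :=
  riccati_positive_general μ hμ f lam hf_bdd hf hlam h0
end

section
/- Let a, b, c, d, e, f be continuous functions on [t₀, t₁] with a, b, c, d positive. Suppose x, y are nonnegative continuous functions, differentiable where nonzero, satisfying x' ≤ a x + b y + e and y' ≤ c x + d y + f wherever x, y > 0. If u, v are positive solutions of u' = a u + b v + e, v' = c u + d v + f, and x(t₀) < u(t₀), y(t₀) < v(t₀), then x < u and y < v on [t₀, t₁]. -/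
/-!
Let `T` be the first time at which one of the strict inequalities `x < u`, `y < v` fails; by
continuity both hold non-strictly on `[t₀, T]`, say with `x T = u T`. Then `x T > 0`, so `x` is
positive and differentiable on some `[s, T]`, and there cooperativity (`a, b ≥ 0`) gives
`x' ≤ a x + b y + e ≤ a u + b v + e = u'`. Hence `u - x` is nondecreasing on `[s, T]`, which is
impossible since it is positive at `s` and vanishes at `T`.
-/

open Set Filter

lemma affine_le_affine {a b e x y u v : ℝ} (ha : 0 ≤ a) (hb : 0 ≤ b) (hx : x ≤ u) (hy : y ≤ v) :
    a * x + b * y + e ≤ a * u + b * v + e := by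
  gcongr

lemma exists_first_not_of_isClosed {p : ℝ → Prop} {t₀ t₁ : ℝ}
    (hp : IsClosed {t ∈ Icc t₀ t₁ | ¬p t}) (ht₀ : p t₀) (hne : ∃ t ∈ Icc t₀ t₁, ¬p t) :
    ∃ T ∈ Ioc t₀ t₁, ¬p T ∧ ∀ s ∈ Ico t₀ T, p s := by
  have hbdd : BddBelow {t ∈ Icc t₀ t₁ | ¬p t} := ⟨t₀, fun _ ht => ht.1.1⟩
  obtain ⟨⟨hT₀, hT₁⟩, hT⟩ := hp.csInf_mem hne hbdd
  refine ⟨_, ⟨hT₀.lt_of_ne fun h => hT (h ▸ ht₀), hT₁⟩, hT, fun s hs => ?_⟩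
  by_contra hps
  exact hs.2.not_ge (csInf_le hbdd ⟨⟨hs.1, hs.2.le.trans hT₁⟩, hps⟩)

lemma le_on_Icc_of_lt_on_Ico {f g : ℝ → ℝ} {t₀ T : ℝ} (hT : t₀ < T)
    (hf : ContinuousOn f (Icc t₀ T)) (hg : ContinuousOn g (Icc t₀ T))
    (hlt : ∀ s ∈ Ico t₀ T, f s < g s) : ∀ s ∈ Icc t₀ T, f s ≤ g s := by
  rw [← closure_Ico hT.ne] at hf hg ⊢
  exact le_on_closure (fun s hs => (hlt s hs).le) hf hg

lemma ne_of_lt_on_Ico_of_hasDerivAt_le {x u x' u' : ℝ → ℝ} {t₀ T : ℝ} (hT : t₀ < T)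
    (hx : ∀ t ∈ Icc t₀ T, 0 < x t → HasDerivAt x (x' t) t)
    (hu : ∀ t ∈ Icc t₀ T, HasDerivAt u (u' t) t)
    (hderiv : ∀ t ∈ Ico t₀ T, 0 < x t → x' t ≤ u' t)
    (hlt : ∀ s ∈ Ico t₀ T, x s < u s) (huT : 0 < u T) : x T ≠ u T := by
  intro hxT
  have hxT₀ : 0 < x T := hxT ▸ huT
  have hxcont : ContinuousAt x T := (hx T (right_mem_Icc.2 hT.le) hxT₀).continuousAt
  obtain ⟨s, hsT, hs⟩ : ∃ s < T, Icc s T ⊆ Icc t₀ T ∩ {r | 0 < x r} :=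
    mem_nhdsLE_iff_exists_Icc_subset.1 <| inter_mem (Icc_mem_nhdsLE hT) <|
      nhdsWithin_le_nhds (hxcont.eventually (lt_mem_nhds hxT₀))
  have hderiv_sub : ∀ t ∈ Icc s T, HasDerivAt (u - x) (u' t - x' t) t := fun t ht =>
    (hu t (hs ht).1).sub (hx t (hs ht).1 (hs ht).2)
  have hmono : MonotoneOn (u - x) (Icc s T) := by
    refine monotoneOn_of_hasDerivWithinAt_nonneg (convex_Icc s T)
      (fun t ht => (hderiv_sub t ht).continuousAt.continuousWithinAt)
      (fun t ht => (hderiv_sub t (interior_subset ht)).hasDerivWithinAt) fun t ht => ?_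
    rw [interior_Icc] at ht
    have ht' : t ∈ Icc s T := Ioo_subset_Icc_self ht
    exact sub_nonneg.2 (hderiv t ⟨(hs ht').1.1, ht.2⟩ (hs ht').2)
  have hs_le : (u - x) s ≤ (u - x) T :=
    hmono (left_mem_Icc.2 hsT.le) (right_mem_Icc.2 hsT.le) hsT.le
  have hs_lt : x s < u s := hlt s ⟨(hs (left_mem_Icc.2 hsT.le)).1.1, hsT⟩
  simp only [Pi.sub_apply, hxT, sub_self] at hs_le
  linarith

theorem ode_comparison_system_general
    (t₀ t₁ : ℝ)
    (a b c d e f x y u v x' y' : ℝ → ℝ)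
    (hap : ∀ t ∈ Icc t₀ t₁, 0 < a t) (hbp : ∀ t ∈ Icc t₀ t₁, 0 < b t)
    (hcp : ∀ t ∈ Icc t₀ t₁, 0 < c t) (hdp : ∀ t ∈ Icc t₀ t₁, 0 < d t)
    (hxc : ContinuousOn x (Icc t₀ t₁)) (hyc : ContinuousOn y (Icc t₀ t₁))
    (hxd : ∀ t ∈ Icc t₀ t₁, x t ≠ 0 →
      HasDerivAt x (x' t) t ∧ x' t ≤ a t * x t + b t * y t + e t)
    (hyd : ∀ t ∈ Icc t₀ t₁, y t ≠ 0 →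
      HasDerivAt y (y' t) t ∧ y' t ≤ c t * x t + d t * y t + f t)
    (hu : ∀ t ∈ Icc t₀ t₁, HasDerivAt u (a t * u t + b t * v t + e t) t)
    (hv : ∀ t ∈ Icc t₀ t₁, HasDerivAt v (c t * u t + d t * v t + f t) t)
    (hup : ∀ t ∈ Icc t₀ t₁, 0 < u t) (hvp : ∀ t ∈ Icc t₀ t₁, 0 < v t)
    (hx_init : x t₀ < u t₀) (hy_init : y t₀ < v t₀) :
    ∀ t ∈ Icc t₀ t₁, x t < u t ∧ y t < v t := by
  have huc : ContinuousOn u (Icc t₀ t₁) := fun t ht => (hu t ht).continuousAt.continuousWithinAt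
  have hvc : ContinuousOn v (Icc t₀ t₁) := fun t ht => (hv t ht).continuousAt.continuousWithinAt
  have hclosed : IsClosed {t ∈ Icc t₀ t₁ | ¬(x t < u t ∧ y t < v t)} := by
    simp only [not_and_or, not_lt, sep_or]
    exact (isClosed_Icc.isClosed_le huc hxc).union (isClosed_Icc.isClosed_le hvc hyc)
  by_contra hbad
  obtain ⟨T, ⟨hT, hT₁⟩, hTbad, hlt⟩ := exists_first_not_of_isClosed hclosed ⟨hx_init, hy_init⟩
    (by simpa only [not_forall, exists_prop] using hbad)
  have hsub : Icc t₀ T ⊆ Icc t₀ t₁ := Icc_subset_Icc_right hT₁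
  have hsub' : Ico t₀ T ⊆ Icc t₀ t₁ := Ico_subset_Icc_self.trans hsub
  have hxu := le_on_Icc_of_lt_on_Ico hT (hxc.mono hsub) (huc.mono hsub) fun s hs => (hlt s hs).1
  have hyv := le_on_Icc_of_lt_on_Ico hT (hyc.mono hsub) (hvc.mono hsub) fun s hs => (hlt s hs).2
  have hTmem : T ∈ Icc t₀ T := right_mem_Icc.2 hT.le
  have hxT : x T ≠ u T := ne_of_lt_on_Ico_of_hasDerivAt_le hT
    (fun t ht hx => (hxd t (hsub ht) hx.ne').1) (fun t ht => hu t (hsub ht))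
    (fun t ht hx => (hxd t (hsub' ht) hx.ne').2.trans <| affine_le_affine (hap t (hsub' ht)).le
      (hbp t (hsub' ht)).le (hlt t ht).1.le (hyv t (Ico_subset_Icc_self ht)))
    (fun s hs => (hlt s hs).1) (hup T (hsub hTmem))
  have hyT : y T ≠ v T := ne_of_lt_on_Ico_of_hasDerivAt_le hT
    (fun t ht hy => (hyd t (hsub ht) hy.ne').1) (fun t ht => hv t (hsub ht))
    (fun t ht hy => (hyd t (hsub' ht) hy.ne').2.trans <| affine_le_affine (hcp t (hsub' ht)).le
      (hdp t (hsub' ht)).le (hxu t (Ico_subset_Icc_self ht)) (hlt t ht).2.le)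
    (fun s hs => (hlt s hs).2) (hvp T (hsub hTmem))
  exact hTbad ⟨(hxu T hTmem).lt_of_ne hxT, (hyv T hTmem).lt_of_ne hyT⟩

/-- Comparison theorem for 2-dimensional cooperative systems of differential inequalities on
`[t₀, t₁]`: nonnegative subsolutions `(x, y)` (differentiable where nonzero) starting strictly
below a positive solution `(u, v)` stay strictly below it. -/
theorem ode_comparison_system
    (t₀ t₁ : ℝ) (ht : t₀ ≤ t₁)
    (a b c d e f x y u v x' y' : ℝ → ℝ)
    (hac : ContinuousOn a (Icc t₀ t₁)) (hbc : ContinuousOn b (Icc t₀ t₁))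
    (hcc : ContinuousOn c (Icc t₀ t₁)) (hdc : ContinuousOn d (Icc t₀ t₁))
    (hec : ContinuousOn e (Icc t₀ t₁)) (hfc : ContinuousOn f (Icc t₀ t₁))
    (hap : ∀ t ∈ Icc t₀ t₁, 0 < a t) (hbp : ∀ t ∈ Icc t₀ t₁, 0 < b t)
    (hcp : ∀ t ∈ Icc t₀ t₁, 0 < c t) (hdp : ∀ t ∈ Icc t₀ t₁, 0 < d t)
    (hxc : ContinuousOn x (Icc t₀ t₁)) (hyc : ContinuousOn y (Icc t₀ t₁))
    (hx0 : ∀ t ∈ Icc t₀ t₁, 0 ≤ x t) (hy0 : ∀ t ∈ Icc t₀ t₁, 0 ≤ y t)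
    (hxd : ∀ t ∈ Icc t₀ t₁, x t ≠ 0 →
      HasDerivAt x (x' t) t ∧ x' t ≤ a t * x t + b t * y t + e t)
    (hyd : ∀ t ∈ Icc t₀ t₁, y t ≠ 0 →
      HasDerivAt y (y' t) t ∧ y' t ≤ c t * x t + d t * y t + f t)
    (hu : ∀ t ∈ Icc t₀ t₁, HasDerivAt u (a t * u t + b t * v t + e t) t)
    (hv : ∀ t ∈ Icc t₀ t₁, HasDerivAt v (c t * u t + d t * v t + f t) t)
    (hup : ∀ t ∈ Icc t₀ t₁, 0 < u t) (hvp : ∀ t ∈ Icc t₀ t₁, 0 < v t)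
    (hx_init : x t₀ < u t₀) (hy_init : y t₀ < v t₀) :
    ∀ t ∈ Icc t₀ t₁, x t < u t ∧ y t < v t :=
  ode_comparison_system_general t₀ t₁ a b c d e f x y u v x' y' hap hbp hcp hdp hxc hyc hxd hyd hu
    hv hup hvp hx_init hy_init
end

section
/- Consider the linear second-order ODE y'' + (c₁ + e^{−ar} b₁(r)) y' + (c₂ + e^{−ar} b₂(r)) y = e^{ωr} b₃(r) on [r₀, ∞), where a > 0, b₁, b₂, b₃ are bounded smooth functions, c₁² − 4c₂ > 0 and μ₁ < μ₂ are the real roots of μ² + c₁μ + c₂ = 0. Then every solution satisfies y = O(e^{max(μ₂, ω) r}) if μ₂ ≠ ω, and y = O(r e^{μ₂ r}) if μ₂ = ω. -/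
open Real


lemma ode_core (r₀ : ℝ) (u Φ u' φ : ℝ → ℝ)
    (hu : ∀ r ≥ r₀, HasDerivAt u (u' r) r)
    (hΦ : ∀ r ≥ r₀, HasDerivAt Φ (φ r) r)
    (hle : ∀ r ≥ r₀, u' r ≤ φ r) :
    ∀ r ≥ r₀, u r ≤ u r₀ + (Φ r - Φ r₀) := by
  intro r hr
  have key : AntitoneOn (fun s => u s - Φ s) (Set.Ici r₀) := by
    apply antitoneOn_of_deriv_nonpos (convex_Ici r₀)
    · intro x hx
      exact ((hu x hx).sub (hΦ x hx)).continuousAt.continuousWithinAt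
    · intro x hx
      rw [interior_Ici] at hx
      exact ((hu x hx.le).sub (hΦ x hx.le)).differentiableAt.differentiableWithinAt
    · intro x hx
      rw [interior_Ici] at hx
      rw [show (fun s => u s - Φ s) = u - Φ from rfl, ((hu x hx.le).sub (hΦ x hx.le)).deriv]
      linarith [hle x hx.le]
  have h2 := key Set.self_mem_Ici (Set.mem_Ici.2 hr) hr
  simp only at h2
  linarith

-- key pointwise inequality for the sqrt-energy derivative
lemma sqrt_energy_ineq (P X Z L' L : ℝ) (hL' : L' ≤ L) (hL : L ≤ 0)
    (hZ : 1 ≤ Z) (hsq : Z ^ 2 = 1 + P ^ 2) :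
    2 * P ^ 1 * (L' * P + X) / (2 * Z) ≤ L * (Z - 1) + |X| := by
  have hZ0 : (0:ℝ) < Z := by linarith
  rw [div_le_iff₀ (by positivity)]
  have hPZ : |P| ≤ Z := by nlinarith [sq_abs P, abs_nonneg P]
  have h1 : P * X ≤ Z * |X| := by
    calc P * X ≤ |P * X| := le_abs_self _
    _ = |P| * |X| := abs_mul _ _
    _ ≤ Z * |X| := mul_le_mul_of_nonneg_right hPZ (abs_nonneg X)
  have h2 : L' * (P * P) ≤ L * ((Z - 1) * Z) := by
    have ha : L' * (P * P) ≤ L * (P * P) := mul_le_mul_of_nonneg_right hL' (by nlinarith)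
    have hb : L * (P * P) ≤ L * ((Z - 1) * Z) := by
      apply mul_le_mul_of_nonpos_left _ hL
      nlinarith
    linarith
  nlinarith [h1, h2]


lemma hexp_deriv (c r : ℝ) : HasDerivAt (fun s : ℝ => exp (-(c * s))) (-c * exp (-(c * r))) r := by
  have h1 : HasDerivAt (fun s : ℝ => -(c * s)) (-c) r := by
    exact ((hasDerivAt_id r).const_mul c).neg.congr_deriv (by simp)
  have := h1.exp
  convert this using 1
  ring

lemma hexp_deriv' (c r : ℝ) : HasDerivAt (fun s : ℝ => exp (c * s)) (c * exp (c * r)) r := by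
  have h1 : HasDerivAt (fun s : ℝ => c * s) c r := by
    simpa using (hasDerivAt_id r).const_mul c
  have := h1.exp
  convert this using 1
  ring

set_option maxHeartbeats 2000000 in
lemma ode_aux (r₀ a ω μ₁ μ₂ N β : ℝ) (ha : 0 < a) (hN : 0 < N)
    (hμ : μ₁ ≤ μ₂) (hβ : β = max μ₂ ω)
    (v w g : ℝ → ℝ)
    (hv : ∀ r ≥ r₀, HasDerivAt v (μ₂ * v r + g r) r)
    (hw : ∀ r ≥ r₀, HasDerivAt w (μ₁ * w r + g r) r)
    (hg : ∀ r ≥ r₀, |g r| ≤ N * exp (ω * r) + N * exp (-(a * r)) * (|v r| + |w r|)) :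
    (ω ≠ μ₂ → ∃ C : ℝ, ∀ r ≥ r₀, |v r| + |w r| ≤ C * exp (β * r)) ∧
    (ω = μ₂ → ∃ C : ℝ, ∀ r ≥ r₀, |v r| + |w r| ≤ C * (1 + (r - r₀)) * exp (β * r)) := by
  have hβ₂ : μ₂ ≤ β := hβ ▸ le_max_left _ _
  have hβω : ω ≤ β := hβ ▸ le_max_right _ _
  set l : ℝ := μ₂ - β with hl_def
  have hl : l ≤ 0 := by simp [hl_def]; linarith
  set p : ℝ → ℝ := fun r => exp (-(β * r)) * v r with hp_def
  set q : ℝ → ℝ := fun r => exp (-(β * r)) * w r with hq_def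
  set z : ℝ → ℝ := fun r => Real.sqrt (1 + p r ^ 2) with hz_def
  set zw : ℝ → ℝ := fun r => Real.sqrt (1 + q r ^ 2) with hzw_def
  set u : ℝ → ℝ := fun r => z r + zw r with hu_def
  -- basic facts
  have hz1 : ∀ r, 1 ≤ z r := by
    intro r
    have : Real.sqrt 1 ≤ z r := Real.sqrt_le_sqrt (by nlinarith [sq_nonneg (p r)])
    simpa using this
  have hzw1 : ∀ r, 1 ≤ zw r := by
    intro r
    have : Real.sqrt 1 ≤ zw r := Real.sqrt_le_sqrt (by nlinarith [sq_nonneg (q r)])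
    simpa using this
  have hzsq : ∀ r, z r ^ 2 = 1 + p r ^ 2 := fun r => Real.sq_sqrt (by positivity)
  have hzwsq : ∀ r, zw r ^ 2 = 1 + q r ^ 2 := fun r => Real.sq_sqrt (by positivity)
  have habsp : ∀ r, |p r| ≤ z r := by
    intro r
    have h1 : Real.sqrt (p r ^ 2) ≤ z r := Real.sqrt_le_sqrt (by linarith [sq_nonneg (p r)])
    rwa [Real.sqrt_sq_eq_abs] at h1
  have habsq : ∀ r, |q r| ≤ zw r := by
    intro r
    have h1 : Real.sqrt (q r ^ 2) ≤ zw r := Real.sqrt_le_sqrt (by linarith [sq_nonneg (q r)])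
    rwa [Real.sqrt_sq_eq_abs] at h1
  have hu2 : ∀ r, 2 ≤ u r := fun r => by
    have := hz1 r; have := hzw1 r; simp only [hu_def]; linarith
  -- derivatives of p and q
  have hp : ∀ r ≥ r₀, HasDerivAt p (l * p r + exp (-(β * r)) * g r) r := by
    intro r hr
    have h1 := (hexp_deriv β r).mul (hv r hr)
    refine h1.congr_deriv ?_
    simp only [hp_def, hl_def]; ring
  have hq : ∀ r ≥ r₀, HasDerivAt q ((μ₁ - β) * q r + exp (-(β * r)) * g r) r := by
    intro r hr
    have h1 := (hexp_deriv β r).mul (hw r hr)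
    refine h1.congr_deriv ?_
    simp only [hq_def]; ring
  -- derivatives of z, zw
  have hz : ∀ r ≥ r₀, HasDerivAt z
      (2 * p r ^ 1 * (l * p r + exp (-(β * r)) * g r) / (2 * z r)) r := by
    intro r hr
    have h1 : HasDerivAt (fun s => 1 + p s ^ 2)
        (2 * p r ^ 1 * (l * p r + exp (-(β * r)) * g r)) r := by
      simpa using (((hp r hr).pow 2).const_add 1)
    exact h1.sqrt (by positivity)
  have hzw : ∀ r ≥ r₀, HasDerivAt zw
      (2 * q r ^ 1 * ((μ₁ - β) * q r + exp (-(β * r)) * g r) / (2 * zw r)) r := by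
    intro r hr
    have h1 : HasDerivAt (fun s => 1 + q s ^ 2)
        (2 * q r ^ 1 * ((μ₁ - β) * q r + exp (-(β * r)) * g r)) r := by
      simpa using (((hq r hr).pow 2).const_add 1)
    exact h1.sqrt (by positivity)
  set du : ℝ → ℝ := fun r => 2 * p r ^ 1 * (l * p r + exp (-(β * r)) * g r) / (2 * z r)
      + 2 * q r ^ 1 * ((μ₁ - β) * q r + exp (-(β * r)) * g r) / (2 * zw r) with hdu_def
  have hu' : ∀ r ≥ r₀, HasDerivAt u (du r) r := fun r hr => (hz r hr).add (hzw r hr)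
  -- bound on the perturbation term
  have hgb : ∀ r ≥ r₀, |exp (-(β * r)) * g r| ≤
      N * exp ((ω - β) * r) + N * exp (-(a * r)) * u r := by
    intro r hr
    have h1 : |exp (-(β * r)) * g r| = exp (-(β * r)) * |g r| := by
      rw [abs_mul, abs_of_pos (exp_pos _)]
    rw [h1]
    have h2 := hg r hr
    have h3 : exp (-(β * r)) * |g r| ≤
        exp (-(β * r)) * (N * exp (ω * r) + N * exp (-(a * r)) * (|v r| + |w r|)) :=
      mul_le_mul_of_nonneg_left h2 (exp_nonneg _)
    have h4 : exp (-(β * r)) * (N * exp (ω * r)) = N * exp ((ω - β) * r) := by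
      rw [show (ω - β) * r = -(β * r) + ω * r by ring, exp_add]; ring
    have h5 : exp (-(β * r)) * (|v r| + |w r|) = |p r| + |q r| := by
      simp only [hp_def, hq_def, abs_mul, abs_of_pos (exp_pos (-(β * r)))]
      ring
    have h6 : |p r| + |q r| ≤ u r := by
      have := habsp r; have := habsq r; simp only [hu_def]; linarith
    calc exp (-(β * r)) * |g r| ≤
        exp (-(β * r)) * (N * exp (ω * r)) + N * exp (-(a * r)) * (exp (-(β * r)) * (|v r| + |w r|)) := by
          rw [mul_add] at h3; convert h3 using 2; ring
    _ = N * exp ((ω - β) * r) + N * exp (-(a * r)) * (|p r| + |q r|) := by rw [h4, h5]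
    _ ≤ N * exp ((ω - β) * r) + N * exp (-(a * r)) * u r := by
          have : (0:ℝ) ≤ N * exp (-(a * r)) := by positivity
          nlinarith [h6]
  -- master differential inequality for u
  have hmaster : ∀ r ≥ r₀, du r ≤
      l * (u r - 2) + 2 * N * exp ((ω - β) * r) + 2 * N * exp (-(a * r)) * u r := by
    intro r hr
    have hb1 := sqrt_energy_ineq (p r) (exp (-(β * r)) * g r) (z r) l l le_rfl hl (hz1 r) (hzsq r)
    have hb2 := sqrt_energy_ineq (q r) (exp (-(β * r)) * g r) (zw r) (μ₁ - β) l
      (by simp [hl_def]; linarith) hl (hzw1 r) (hzwsq r)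
    have hb3 := hgb r hr
    clear_value l p q z zw u du
    simp only [hdu_def]
    have heq1 : l * (u r - 2) = l * (z r - 1) + l * (zw r - 1) := by
      simp only [hu_def]; ring
    have heq2 : 2 * N * exp (-(a * r)) * u r
        = N * exp (-(a * r)) * u r + N * exp (-(a * r)) * u r := by ring
    linarith
  -- integrating factor
  set E : ℝ → ℝ := fun r => exp ((2 * N / a) * (exp (-(a * r)) - exp (-(a * r₀)))) with hE_def
  have hE : ∀ r, HasDerivAt E (-(2 * N * exp (-(a * r))) * E r) r := by
    intro r
    have h1 : HasDerivAt (fun s => (2 * N / a) * (exp (-(a * s)) - exp (-(a * r₀))))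
        ((2 * N / a) * (-a * exp (-(a * r)))) r :=
      ((hexp_deriv a r).sub_const _).const_mul _
    have h2 := h1.exp
    convert h2 using 1
    simp only [hE_def]
    field_simp
  have hE1 : ∀ r ≥ r₀, E r ≤ 1 := by
    intro r hr
    simp only [hE_def]
    rw [exp_le_one_iff]
    have h1 : exp (-(a * r)) ≤ exp (-(a * r₀)) := exp_le_exp.2 (by nlinarith)
    have h2 : (0:ℝ) ≤ 2 * N / a := by positivity
    nlinarith
  set Em : ℝ := exp (-((2 * N / a) * exp (-(a * r₀)))) with hEm_def
  have hEm_pos : 0 < Em := exp_pos _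
  have hEm : ∀ r, Em ≤ E r := by
    intro r
    simp only [hE_def, hEm_def]
    apply exp_le_exp.2
    have h1 : 0 ≤ exp (-(a * r)) := exp_nonneg _
    have h2 : (0:ℝ) ≤ 2 * N / a := by positivity
    nlinarith [exp_pos (-(a * r₀))]
  have hEpos : ∀ r, 0 < E r := fun r => exp_pos _
  -- the Lyapunov function
  set Ψ : ℝ → ℝ := fun r => u r * exp (-(l * r)) * E r with hPsi_def
  set dΨ : ℝ → ℝ := fun r =>
      (du r - l * u r - 2 * N * exp (-(a * r)) * u r) * (exp (-(l * r)) * E r) with hdPsi_def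
  have hΨderiv : ∀ r ≥ r₀, HasDerivAt Ψ (dΨ r) r := by
    intro r hr
    have h1 := ((hu' r hr).mul (hexp_deriv l r)).mul (hE r)
    refine h1.congr_deriv ?_
    simp only [hdPsi_def, Pi.mul_apply]
    ring
  have hΨle : ∀ r ≥ r₀, dΨ r ≤ (-2 * l) * exp (-(l * r)) + 2 * N * exp ((ω - μ₂) * r) := by
    intro r hr
    have hm := hmaster r hr
    have hA : du r - l * u r - 2 * N * exp (-(a * r)) * u r
        ≤ -2 * l + 2 * N * exp ((ω - β) * r) := by
      have h0 := hu2 r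
      clear_value l u du
      nlinarith [exp_pos (-(a * r))]
    have hc : (0:ℝ) ≤ -2 * l + 2 * N * exp ((ω - β) * r) := by
      nlinarith [exp_pos ((ω - β) * r)]
    have h2 : dΨ r ≤ (-2 * l + 2 * N * exp ((ω - β) * r)) * (exp (-(l * r)) * E r) := by
      simp only [hdPsi_def]
      exact mul_le_mul_of_nonneg_right hA (by positivity)
    have h3 : (-2 * l + 2 * N * exp ((ω - β) * r)) * (exp (-(l * r)) * E r)
        ≤ (-2 * l + 2 * N * exp ((ω - β) * r)) * exp (-(l * r)) := by
      nlinarith [mul_nonneg (mul_nonneg hc (exp_nonneg (-(l * r))))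
        (sub_nonneg.2 (hE1 r hr)), exp_pos (-(l * r))]
    have h4 : (-2 * l + 2 * N * exp ((ω - β) * r)) * exp (-(l * r))
        = (-2 * l) * exp (-(l * r)) + 2 * N * exp ((ω - μ₂) * r) := by
      have h5 : exp ((ω - β) * r) * exp (-(l * r)) = exp ((ω - μ₂) * r) := by
        rw [← exp_add]; congr 1; rw [hl_def]; ring
      rw [← h5]; ring
    rw [h4] at h3
    linarith
  have hΨ0 : ∀ r, 0 ≤ Ψ r := by
    intro r
    simp only [hPsi_def]
    have h0 := hu2 r
    positivity
  have hu_from : ∀ r, u r * Em ≤ Ψ r * exp (l * r) := by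
    intro r
    have k1 : exp (-(l * r)) * exp (l * r) = 1 := by rw [← exp_add]; simp
    have h1 : Ψ r * exp (l * r) = u r * E r := by
      simp only [hPsi_def]
      calc u r * exp (-(l * r)) * E r * exp (l * r)
          = u r * E r * (exp (-(l * r)) * exp (l * r)) := by ring
        _ = u r * E r := by rw [k1, mul_one]
    rw [h1]
    have h2 := hEm r
    have h3 : 0 ≤ u r := by linarith [hu2 r]
    nlinarith
  have hvw : ∀ r, |v r| + |w r| ≤ u r * exp (β * r) := by
    intro r
    have k1 : exp (β * r) * exp (-(β * r)) = 1 := by rw [← exp_add]; simp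
    have hv1 : |v r| ≤ exp (β * r) * z r := by
      have h1 : |v r| = exp (β * r) * |p r| := by
        simp only [hp_def]
        rw [abs_mul, abs_of_pos (exp_pos _), ← mul_assoc, k1, one_mul]
      rw [h1]
      exact mul_le_mul_of_nonneg_left (habsp r) (exp_nonneg _)
    have hw1 : |w r| ≤ exp (β * r) * zw r := by
      have h1 : |w r| = exp (β * r) * |q r| := by
        simp only [hq_def]
        rw [abs_mul, abs_of_pos (exp_pos _), ← mul_assoc, k1, one_mul]
      rw [h1]
      exact mul_le_mul_of_nonneg_left (habsq r) (exp_nonneg _)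
    have h2 : u r * exp (β * r) = exp (β * r) * z r + exp (β * r) * zw r := by
      simp only [hu_def]; ring
    linarith
  clear_value l p q z zw u du E Em Ψ dΨ
  clear hv hw hg hp hq hz hzw hmaster hgb hE hE1 hEm hz1 hzw1 hzsq hzwsq habsp habsq hu'
  constructor
  · -- non-resonant case
    intro hne
    have hne' : ω - μ₂ ≠ 0 := sub_ne_zero.2 hne
    set Φ : ℝ → ℝ := fun s =>
        2 * exp (-(l * s)) + (2 * N / (ω - μ₂)) * exp ((ω - μ₂) * s) with hPhi_def
    have hΦd : ∀ s, HasDerivAt Φ ((-2 * l) * exp (-(l * s)) + 2 * N * exp ((ω - μ₂) * s)) s := by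
      intro s
      have h1 := (hexp_deriv l s).const_mul 2
      have h2 := (hexp_deriv' (ω - μ₂) s).const_mul (2 * N / (ω - μ₂))
      have h3 := h1.add h2
      refine h3.congr_deriv ?_
      field_simp
    have hcore := ode_core r₀ Ψ Φ dΨ
        (fun s => (-2 * l) * exp (-(l * s)) + 2 * N * exp ((ω - μ₂) * s))
        hΨderiv (fun s _ => hΦd s) hΨle
    clear_value Φ
    clear hΦd hΨle hΨderiv
    rcases lt_or_gt_of_ne hne with hlt | hgt
    · -- ω < μ₂, β = μ₂, l = 0
      have hβa : β = μ₂ := by rw [hβ]; exact max_eq_left hlt.le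
      have hl0 : l = 0 := by rw [hl_def, hβa]; ring
      refine ⟨(Ψ r₀ + 2 * N / (μ₂ - ω) * exp ((ω - μ₂) * r₀)) / Em, ?_⟩
      intro r hr
      have hb := hcore r hr
      have h1 := hu_from r
      have h2 : exp (l * r) = 1 := by rw [hl0]; simp
      rw [h2, mul_one] at h1
      have h3 : Φ r - Φ r₀ ≤ 2 * N / (μ₂ - ω) * exp ((ω - μ₂) * r₀) := by
        simp only [hPhi_def, hl0, neg_zero, zero_mul, exp_zero]
        have e1 : exp ((ω - μ₂) * r) ≤ exp ((ω - μ₂) * r₀) := exp_le_exp.2 (by nlinarith)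
        have e2 : (0:ℝ) < exp ((ω - μ₂) * r) := exp_pos _
        have e3 : (0:ℝ) < exp ((ω - μ₂) * r₀) := exp_pos _
        have hc : 2 * N / (ω - μ₂) < 0 := div_neg_of_pos_of_neg (by positivity) (by linarith)
        have hd : 2 * N / (μ₂ - ω) = -(2 * N / (ω - μ₂)) := by
          rw [show μ₂ - ω = -(ω - μ₂) by ring, div_neg]
        rw [hd]
        have e4 : 2 * N / (ω - μ₂) * exp ((ω - μ₂) * r) ≤ 0 :=
          mul_nonpos_of_nonpos_of_nonneg hc.le e2.le
        linarith
      have hu_le : u r ≤ (Ψ r₀ + 2 * N / (μ₂ - ω) * exp ((ω - μ₂) * r₀)) / Em := by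
        rw [le_div_iff₀ hEm_pos]
        linarith
      calc |v r| + |w r| ≤ u r * exp (β * r) := hvw r
        _ ≤ (Ψ r₀ + 2 * N / (μ₂ - ω) * exp ((ω - μ₂) * r₀)) / Em * exp (β * r) :=
            mul_le_mul_of_nonneg_right hu_le (exp_nonneg _)
    · -- μ₂ < ω, β = ω, l = μ₂ - ω < 0
      have hβb : β = ω := by rw [hβ]; exact max_eq_right hgt.le
      have hlneg : l < 0 := by rw [hl_def, hβb]; linarith
      have hcpos : (0:ℝ) < 2 * N / (ω - μ₂) := by
        apply div_pos (by positivity); linarith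
      refine ⟨(Ψ r₀ * exp (l * r₀) + 2 + 2 * N / (ω - μ₂)) / Em, ?_⟩
      intro r hr
      have hb := hcore r hr
      have h1 := hu_from r
      have k1 : exp (-(l * r)) * exp (l * r) = 1 := by rw [← exp_add]; simp
      have k2 : exp ((ω - μ₂) * r) * exp (l * r) = 1 := by
        rw [← exp_add, show (ω - μ₂) * r + l * r = 0 by rw [hl_def, hβb]; ring, exp_zero]
      have k3 : exp (l * r) ≤ exp (l * r₀) := exp_le_exp.2 (by nlinarith)
      have h2 : Ψ r * exp (l * r) ≤ (Ψ r₀ + (Φ r - Φ r₀)) * exp (l * r) :=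
        mul_le_mul_of_nonneg_right hb (exp_nonneg _)
      have h3 : (Ψ r₀ + (Φ r - Φ r₀)) * exp (l * r)
          ≤ Ψ r₀ * exp (l * r₀) + 2 + 2 * N / (ω - μ₂) := by
        simp only [hPhi_def]
        have e4 : (0:ℝ) < exp (-(l * r₀)) * exp (l * r) :=
          mul_pos (exp_pos _) (exp_pos _)
        have e5 : (0:ℝ) < exp ((ω - μ₂) * r₀) * exp (l * r) :=
          mul_pos (exp_pos _) (exp_pos _)
        have e6 := mul_le_mul_of_nonneg_left k3 (hΨ0 r₀)
        nlinarith [k1, k2, hcpos]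
      have hu_le : u r ≤ (Ψ r₀ * exp (l * r₀) + 2 + 2 * N / (ω - μ₂)) / Em := by
        rw [le_div_iff₀ hEm_pos]
        linarith
      calc |v r| + |w r| ≤ u r * exp (β * r) := hvw r
        _ ≤ (Ψ r₀ * exp (l * r₀) + 2 + 2 * N / (ω - μ₂)) / Em * exp (β * r) :=
            mul_le_mul_of_nonneg_right hu_le (exp_nonneg _)
  · -- resonant case
    intro hres
    have hβc : β = μ₂ := by rw [hβ, hres, max_self]
    have hl0 : l = 0 := by rw [hl_def, hβc]; ring
    set Φ : ℝ → ℝ := fun s => 2 * N * s with hPhi_def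
    have hΦd : ∀ s, HasDerivAt Φ (2 * N) s := by
      intro s
      simpa using (hasDerivAt_id s).const_mul (2 * N)
    have hle2 : ∀ r ≥ r₀, dΨ r ≤ 2 * N := by
      intro r hr
      have := hΨle r hr
      rw [hl0, hres] at this
      simpa using this
    have hcore := ode_core r₀ Ψ Φ dΨ (fun _ => 2 * N) hΨderiv (fun s _ => hΦd s) hle2
    clear_value Φ
    clear hΦd hle2 hΨle hΨderiv
    refine ⟨(Ψ r₀ + 2 * N) / Em, ?_⟩
    intro r hr
    have hb := hcore r hr
    have h1 := hu_from r
    have h2 : exp (l * r) = 1 := by rw [hl0]; simp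
    rw [h2, mul_one] at h1
    have h3 : Ψ r₀ + (Φ r - Φ r₀) ≤ (Ψ r₀ + 2 * N) * (1 + (r - r₀)) := by
      simp only [hPhi_def]
      nlinarith [hΨ0 r₀, hN]
    have hu_le : u r ≤ (Ψ r₀ + 2 * N) / Em * (1 + (r - r₀)) := by
      rw [div_mul_eq_mul_div, le_div_iff₀ hEm_pos]
      nlinarith
    calc |v r| + |w r| ≤ u r * exp (β * r) := hvw r
      _ ≤ (Ψ r₀ + 2 * N) / Em * (1 + (r - r₀)) * exp (β * r) := by
          apply mul_le_mul_of_nonneg_right hu_le (exp_nonneg _)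


set_option maxHeartbeats 1000000 in
/-- Asymptotics of solutions of an asymptotically constant-coefficient second order linear ODE
`y'' + (c₁ + e^{-ar} b₁) y' + (c₂ + e^{-ar} b₂) y = e^{ωr} b₃` with distinct real
characteristic roots `μ₁ < μ₂`: every solution is `O(e^{max(μ₂,ω) r})` if `μ₂ ≠ ω`, and
`O(r e^{μ₂ r})` if `μ₂ = ω`. -/
theorem ode_asymptotics_distinct_roots
    (r₀ a c₁ c₂ ω μ₁ μ₂ M : ℝ) (ha : 0 < a) (hM : 0 < M)
    (b₁ b₂ b₃ : ℝ → ℝ)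
    (hb₁ : ContDiff ℝ (⊤ : ℕ∞) b₁) (hb₂ : ContDiff ℝ (⊤ : ℕ∞) b₂) (hb₃ : ContDiff ℝ (⊤ : ℕ∞) b₃)
    (hb₁M : ∀ r ≥ r₀, |b₁ r| ≤ M) (hb₂M : ∀ r ≥ r₀, |b₂ r| ≤ M) (hb₃M : ∀ r ≥ r₀, |b₃ r| ≤ M)
    (hdisc : 0 < c₁ ^ 2 - 4 * c₂)
    (hμ₁ : μ₁ ^ 2 + c₁ * μ₁ + c₂ = 0) (hμ₂ : μ₂ ^ 2 + c₁ * μ₂ + c₂ = 0) (hμ : μ₁ < μ₂)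
    (y y' y'' : ℝ → ℝ)
    (hy : ∀ r ≥ r₀, HasDerivAt y (y' r) r)
    (hy' : ∀ r ≥ r₀, HasDerivAt y' (y'' r) r)
    (heq : ∀ r ≥ r₀,
      y'' r + (c₁ + exp (-a * r) * b₁ r) * y' r + (c₂ + exp (-a * r) * b₂ r) * y r
        = exp (ω * r) * b₃ r) :
    (μ₂ ≠ ω → ∃ C : ℝ, ∀ r ≥ r₀, |y r| ≤ C * exp (max μ₂ ω * r)) ∧
    (μ₂ = ω → ∃ C : ℝ, ∀ r ≥ r₀, |y r| ≤ C * (1 + |r|) * exp (μ₂ * r)) := by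
  -- Vieta's formulas
  have hc₁ : c₁ = -(μ₁ + μ₂) := by
    have h0 : (μ₁ - μ₂) * (μ₁ + μ₂ + c₁) = 0 := by nlinarith [hμ₁, hμ₂]
    rcases mul_eq_zero.1 h0 with h | h
    · exact absurd (show μ₁ = μ₂ by linarith) (ne_of_lt hμ)
    · linarith
  have hc₂ : c₂ = μ₁ * μ₂ := by nlinarith [hμ₁, hc₁]
  have hd : (0:ℝ) < μ₂ - μ₁ := by linarith
  set d : ℝ := μ₂ - μ₁ with hd_def
  set v : ℝ → ℝ := fun r => y' r - μ₁ * y r with hv_def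
  set w : ℝ → ℝ := fun r => y' r - μ₂ * y r with hw_def
  set g : ℝ → ℝ := fun r =>
      exp (ω * r) * b₃ r - exp (-(a * r)) * (b₁ r * y' r + b₂ r * y r) with hg_def
  have hma : ∀ r : ℝ, -a * r = -(a * r) := fun r => by ring
  have hv : ∀ r ≥ r₀, HasDerivAt v (μ₂ * v r + g r) r := by
    intro r hr
    have h1 := (hy' r hr).sub ((hy r hr).const_mul μ₁)
    refine h1.congr_deriv ?_
    have h2 := heq r hr
    rw [hma r] at h2
    simp only [hv_def, hg_def]
    linear_combination h2 - y' r * hc₁ - y r * hc₂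
  have hw : ∀ r ≥ r₀, HasDerivAt w (μ₁ * w r + g r) r := by
    intro r hr
    have h1 := (hy' r hr).sub ((hy r hr).const_mul μ₂)
    refine h1.congr_deriv ?_
    have h2 := heq r hr
    rw [hma r] at h2
    simp only [hw_def, hg_def]
    linear_combination h2 - y' r * hc₁ - y r * hc₂
  set c₀ : ℝ := (1 + |μ₁| + |μ₂|) / d with hc₀_def
  have hc₀pos : 0 < c₀ := by
    apply div_pos _ hd
    positivity
  set N : ℝ := M + M * c₀ with hN_def
  have hN : 0 < N := by nlinarith
  have hyd : ∀ r, d * y r = v r - w r := by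
    intro r; simp only [hv_def, hw_def, hd_def]; ring
  have hy'd : ∀ r, d * y' r = μ₂ * v r - μ₁ * w r := by
    intro r; simp only [hv_def, hw_def, hd_def]; ring
  have hyb : ∀ r, |y r| + |y' r| ≤ c₀ * (|v r| + |w r|) := by
    intro r
    have h1 : d * |y r| ≤ |v r| + |w r| := by
      calc d * |y r| = |d * y r| := by rw [abs_mul, abs_of_pos hd]
        _ = |v r - w r| := by rw [hyd r]
        _ ≤ |v r| + |w r| := abs_sub _ _
    have h2 : d * |y' r| ≤ (|μ₁| + |μ₂|) * (|v r| + |w r|) := by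
      calc d * |y' r| = |d * y' r| := by rw [abs_mul, abs_of_pos hd]
        _ = |μ₂ * v r - μ₁ * w r| := by rw [hy'd r]
        _ ≤ |μ₂ * v r| + |μ₁ * w r| := abs_sub _ _
        _ = |μ₂| * |v r| + |μ₁| * |w r| := by rw [abs_mul, abs_mul]
        _ ≤ (|μ₁| + |μ₂|) * (|v r| + |w r|) := by
            nlinarith [abs_nonneg (v r), abs_nonneg (w r), abs_nonneg μ₁, abs_nonneg μ₂]
    have h3 : c₀ * (|v r| + |w r|) * d = (1 + |μ₁| + |μ₂|) * (|v r| + |w r|) := by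
      rw [hc₀_def]; field_simp
    have h4 : 0 ≤ |v r| + |w r| := by positivity
    nlinarith [h1, h2, h3, h4]
  have hgB : ∀ r ≥ r₀, |g r| ≤ N * exp (ω * r) + N * exp (-(a * r)) * (|v r| + |w r|) := by
    intro r hr
    have e1 : (0:ℝ) < exp (ω * r) := exp_pos _
    have e2 : (0:ℝ) < exp (-(a * r)) := exp_pos _
    have h1 : |g r| ≤ exp (ω * r) * |b₃ r| + exp (-(a * r)) * (|b₁ r| * |y' r| + |b₂ r| * |y r|) := by
      simp only [hg_def]
      calc |exp (ω * r) * b₃ r - exp (-(a * r)) * (b₁ r * y' r + b₂ r * y r)|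
          ≤ |exp (ω * r) * b₃ r| + |exp (-(a * r)) * (b₁ r * y' r + b₂ r * y r)| := abs_sub _ _
        _ ≤ exp (ω * r) * |b₃ r| + exp (-(a * r)) * (|b₁ r| * |y' r| + |b₂ r| * |y r|) := by
            rw [abs_mul, abs_mul, abs_of_pos e1, abs_of_pos e2]
            have : |b₁ r * y' r + b₂ r * y r| ≤ |b₁ r| * |y' r| + |b₂ r| * |y r| := by
              calc |b₁ r * y' r + b₂ r * y r| ≤ |b₁ r * y' r| + |b₂ r * y r| := abs_add_le _ _
                _ = |b₁ r| * |y' r| + |b₂ r| * |y r| := by rw [abs_mul, abs_mul]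
            nlinarith
    have h2 : |b₁ r| * |y' r| + |b₂ r| * |y r| ≤ M * (|y r| + |y' r|) := by
      nlinarith [hb₁M r hr, hb₂M r hr, abs_nonneg (y r), abs_nonneg (y' r),
        abs_nonneg (b₁ r), abs_nonneg (b₂ r)]
    have h3 := hyb r
    have h4 : 0 ≤ |v r| + |w r| := by positivity
    have h5 : |b₃ r| ≤ M := hb₃M r hr
    have hMN : M ≤ N := by nlinarith
    have hMc₀N : M * c₀ ≤ N := by nlinarith
    calc |g r| ≤ exp (ω * r) * |b₃ r| + exp (-(a * r)) * (|b₁ r| * |y' r| + |b₂ r| * |y r|) := h1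
      _ ≤ exp (ω * r) * M + exp (-(a * r)) * (M * (c₀ * (|v r| + |w r|))) := by
          have i1 : exp (ω * r) * |b₃ r| ≤ exp (ω * r) * M :=
            mul_le_mul_of_nonneg_left h5 e1.le
          have i2 : |b₁ r| * |y' r| + |b₂ r| * |y r| ≤ M * (c₀ * (|v r| + |w r|)) := by
            nlinarith [h2, h3, hM]
          have i3 := mul_le_mul_of_nonneg_left i2 e2.le
          linarith
      _ ≤ N * exp (ω * r) + N * exp (-(a * r)) * (|v r| + |w r|) := by
          have i4 : exp (ω * r) * M ≤ N * exp (ω * r) := by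
            rw [mul_comm]; exact mul_le_mul_of_nonneg_right hMN e1.le
          have i5 : exp (-(a * r)) * (M * (c₀ * (|v r| + |w r|)))
              ≤ N * exp (-(a * r)) * (|v r| + |w r|) := by
            have : M * c₀ * (|v r| + |w r|) ≤ N * (|v r| + |w r|) :=
              mul_le_mul_of_nonneg_right hMc₀N h4
            nlinarith [e2]
          linarith
  obtain ⟨H1, H2⟩ := ode_aux r₀ a ω μ₁ μ₂ N (max μ₂ ω) ha hN hμ.le rfl v w g hv hw hgB
  constructor
  · -- non-resonant
    intro hne
    obtain ⟨C, hC⟩ := H1 (fun h => hne h.symm)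
    refine ⟨C / d, ?_⟩
    intro r hr
    have h1 := hC r hr
    have h2 : d * |y r| ≤ |v r| + |w r| := by
      calc d * |y r| = |d * y r| := by rw [abs_mul, abs_of_pos hd]
        _ = |v r - w r| := by rw [hyd r]
        _ ≤ |v r| + |w r| := abs_sub _ _
    rw [div_mul_eq_mul_div, le_div_iff₀ hd]
    nlinarith [h1, h2]
  · -- resonant
    intro hres
    have hωμ : ω = μ₂ := hres.symm
    obtain ⟨C, hC⟩ := H2 hωμ
    have hβ : max μ₂ ω = μ₂ := by rw [← hres, max_self]
    refine ⟨|C| / d * (1 + |r₀|), ?_⟩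
    intro r hr
    have h1 := hC r hr
    rw [hβ] at h1
    have h2 : d * |y r| ≤ |v r| + |w r| := by
      calc d * |y r| = |d * y r| := by rw [abs_mul, abs_of_pos hd]
        _ = |v r - w r| := by rw [hyd r]
        _ ≤ |v r| + |w r| := abs_sub _ _
    have key : 1 + (r - r₀) ≤ (1 + |r₀|) * (1 + |r|) := by
      nlinarith [abs_nonneg r, abs_nonneg r₀, le_abs_self r, neg_abs_le r₀,
        mul_nonneg (abs_nonneg r₀) (abs_nonneg r)]
    have e0 : (0:ℝ) < exp (μ₂ * r) := exp_pos _
    have hs : (0:ℝ) ≤ 1 + (r - r₀) := by linarith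
    have hA : C * (1 + (r - r₀)) * exp (μ₂ * r) ≤ |C| * ((1 + (r - r₀)) * exp (μ₂ * r)) := by
      have := mul_le_mul_of_nonneg_right (le_abs_self C)
        (mul_nonneg hs e0.le)
      nlinarith [this]
    have hB : |C| * ((1 + (r - r₀)) * exp (μ₂ * r))
        ≤ |C| * ((1 + |r₀|) * (1 + |r|) * exp (μ₂ * r)) := by
      apply mul_le_mul_of_nonneg_left _ (abs_nonneg C)
      exact mul_le_mul_of_nonneg_right key e0.le
    rw [div_mul_eq_mul_div, div_mul_eq_mul_div, div_mul_eq_mul_div, le_div_iff₀ hd]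
    nlinarith [h1, h2, hA, hB]
end

section
/- Consider y'' + e^{−ar} b₁(r) y' + e^{−ar} b₂(r) y = e^{ωr} b₃(r) on [r₀, ∞), with a > 0 and b₁, b₂, b₃ bounded smooth functions. Then every solution satisfies y = O(r) if ω < 0, y = O(r²) if ω = 0, and y = O(e^{ωr}) if ω > 0. -/
open Real intervalIntegral

lemma lin_le_exp' {b x : ℝ} (hb : 0 < b) (hx : 0 ≤ x) : x ≤ (1/b) * exp (b*x) := by
  have h := Real.add_one_le_exp (b*x)
  rw [div_mul_eq_mul_div, le_div_iff₀ hb]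
  nlinarith

lemma intExp (c t₀ t : ℝ) (hc : c ≠ 0) :
    ∫ s in t₀..t, exp (c*s) = (exp (c*t) - exp (c*t₀))/c := by
  have h : ∀ x ∈ Set.uIcc t₀ t, HasDerivAt (fun s => exp (c*s)/c) (exp (c*x)) x := by
    intro x _
    have := (((hasDerivAt_id x).const_mul c).exp).div_const c
    refine this.congr_deriv ?_
    simp only [id, mul_one]
    field_simp
  have hi : IntervalIntegrable (fun s => exp (c*s)) MeasureTheory.volume t₀ t :=
    (Real.continuous_exp.comp (continuous_const.mul continuous_id)).intervalIntegrable _ _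
  rw [integral_eq_sub_of_hasDerivAt h hi]
  ring

lemma gronwall_aux {r₀ : ℝ} {θ E k G : ℝ → ℝ}
    (hk : Continuous k) (hG : Continuous G)
    (hθd : ∀ b, HasDerivAt θ (E b) b)
    (hθ0 : θ r₀ = 0)
    (hknn : ∀ s, r₀ ≤ s → 0 ≤ k s) (hGnn : ∀ s, r₀ ≤ s → 0 ≤ G s)
    (hEkG : ∀ s, r₀ ≤ s → E s ≤ k s * θ s + G s) :
    ∀ r, r₀ ≤ r → θ r ≤ exp (∫ s in r₀..r, k s) * ∫ s in r₀..r, G s := by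
  intro r hr
  set K : ℝ → ℝ := fun t => ∫ s in r₀..t, k s with hKdef
  have hKd : ∀ b, HasDerivAt K (k b) b := fun b => (hk.integral_hasStrictDerivAt r₀ b).hasDerivAt
  have hKc : Continuous K := by
    have : Differentiable ℝ K := fun b => (hKd b).differentiableAt
    exact this.continuous
  have hGK : Continuous (fun s => G s * exp (-K s)) :=
    hG.mul (Real.continuous_exp.comp hKc.neg)
  set W : ℝ → ℝ := fun t => ∫ s in r₀..t, G s * exp (-K s) with hWdef
  have hWd : ∀ b, HasDerivAt W (G b * exp (-K b)) b :=
    fun b => (hGK.integral_hasStrictDerivAt r₀ b).hasDerivAt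
  set Z : ℝ → ℝ := fun t => θ t * exp (-K t) - W t with hZdef
  have hZd : ∀ b, HasDerivAt Z ((E b - k b * θ b - G b) * exp (-K b)) b := by
    intro b
    have h1 : HasDerivAt (fun t => θ t * exp (-K t))
        (E b * exp (-K b) + θ b * (exp (-K b) * -k b)) b :=
      (hθd b).mul (((hKd b).neg).exp)
    have h2 := h1.sub (hWd b)
    refine h2.congr_deriv ?_
    ring
  have hZc : Continuous Z := by
    have : Differentiable ℝ Z := fun b => (hZd b).differentiableAt
    exact this.continuous
  have hZmono : AntitoneOn Z (Set.Ici r₀) := by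
    apply antitoneOn_of_deriv_nonpos (convex_Ici r₀) hZc.continuousOn
    · intro x _
      exact (hZd x).differentiableAt.differentiableWithinAt
    · intro x hx
      rw [interior_Ici] at hx
      rw [(hZd x).deriv]
      have h2 := hEkG x (le_of_lt hx)
      exact mul_nonpos_of_nonpos_of_nonneg (by linarith) (exp_pos _).le
  have hZr : Z r ≤ Z r₀ := hZmono Set.self_mem_Ici hr hr
  have hZ0 : Z r₀ = 0 := by simp [hZdef, hWdef, hθ0]
  have hKnn : ∀ s, r₀ ≤ s → 0 ≤ K s :=
    fun s hs => integral_nonneg hs (fun t ht => hknn t ht.1)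
  have h4 : W r ≤ ∫ s in r₀..r, G s := by
    apply integral_mono_on hr (hGK.intervalIntegrable _ _) (hG.intervalIntegrable _ _)
    intro s hs
    have h5 : exp (-K s) ≤ 1 := exp_le_one_iff.2 (neg_nonpos.2 (hKnn s hs.1))
    nlinarith [hGnn s hs.1]
  have h6 : θ r * exp (-K r) ≤ ∫ s in r₀..r, G s := by
    rw [hZ0] at hZr
    simp only [hZdef, sub_nonpos] at hZr
    calc θ r * exp (-K r) ≤ W r := by simpa [sub_nonpos] using hZr
      _ ≤ _ := h4
  calc θ r = (θ r * exp (-K r)) * exp (K r) := by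
        rw [mul_assoc, ← exp_add]; simp
    _ ≤ (∫ s in r₀..r, G s) * exp (K r) :=
        mul_le_mul_of_nonneg_right h6 (exp_pos _).le
    _ = exp (K r) * ∫ s in r₀..r, G s := mul_comm _ _


set_option maxHeartbeats 2000000 in
/-- Asymptotics of solutions of `y'' + e^{-ar} b₁ y' + e^{-ar} b₂ y = e^{ωr} b₃` (repeated
characteristic root `0`): every solution is `O(r)` if `ω < 0`, `O(r²)` if `ω = 0`, and
`O(e^{ωr})` if `ω > 0`. -/
theorem ode_asymptotics_repeated_root
    (r₀ a ω M : ℝ) (ha : 0 < a) (hM : 0 < M)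
    (b₁ b₂ b₃ : ℝ → ℝ)
    (hb₁ : ContDiff ℝ (⊤ : ℕ∞) b₁) (hb₂ : ContDiff ℝ (⊤ : ℕ∞) b₂) (hb₃ : ContDiff ℝ (⊤ : ℕ∞) b₃)
    (hb₁M : ∀ r ≥ r₀, |b₁ r| ≤ M) (hb₂M : ∀ r ≥ r₀, |b₂ r| ≤ M) (hb₃M : ∀ r ≥ r₀, |b₃ r| ≤ M)
    (y y' y'' : ℝ → ℝ)
    (hy : ∀ r ≥ r₀, HasDerivAt y (y' r) r)
    (hy' : ∀ r ≥ r₀, HasDerivAt y' (y'' r) r)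
    (heq : ∀ r ≥ r₀,
      y'' r + exp (-a * r) * b₁ r * y' r + exp (-a * r) * b₂ r * y r = exp (ω * r) * b₃ r) :
    (ω < 0 → ∃ C : ℝ, ∀ r ≥ r₀, |y r| ≤ C * (1 + |r|)) ∧
    (ω = 0 → ∃ C : ℝ, ∀ r ≥ r₀, |y r| ≤ C * (1 + |r|) ^ 2) ∧
    (0 < ω → ∃ C : ℝ, ∀ r ≥ r₀, |y r| ≤ C * exp (ω * r)) := by
  -- global continuous surrogates
  have hym : Continuous (fun s : ℝ => y (max s r₀)) := by
    rw [continuous_iff_continuousAt]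
    intro s
    have h1 : ContinuousAt y (max s r₀) := (hy _ (le_max_right s r₀)).continuousAt
    have h2 : ContinuousAt (fun t : ℝ => max t r₀) s :=
      (continuous_id.max continuous_const).continuousAt
    exact ContinuousAt.comp (f := fun t : ℝ => max t r₀) h1 h2
  have hy'm : Continuous (fun s : ℝ => y' (max s r₀)) := by
    rw [continuous_iff_continuousAt]
    intro s
    have h1 : ContinuousAt y' (max s r₀) := (hy' _ (le_max_right s r₀)).continuousAt
    have h2 : ContinuousAt (fun t : ℝ => max t r₀) s :=
      (continuous_id.max continuous_const).continuousAt
    exact ContinuousAt.comp (f := fun t : ℝ => max t r₀) h1 h2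
  set Y₀ : ℝ := |y r₀| with hY₀def
  set U₀ : ℝ := |y' r₀| with hU₀def
  have hY₀nn : 0 ≤ Y₀ := abs_nonneg _
  have hU₀nn : 0 ≤ U₀ := abs_nonneg _
  set E : ℝ → ℝ := fun s => M * exp (-a*s) * (|y' (max s r₀)| + |y (max s r₀)|) with hEdef
  have hEc : Continuous E := by
    apply (continuous_const.mul (Real.continuous_exp.comp (continuous_const.mul continuous_id))).mul
    exact hy'm.abs.add hym.abs
  have hEnn : ∀ s, 0 ≤ E s := by
    intro s
    have := exp_pos (-a*s)
    have := abs_nonneg (y' (max s r₀))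
    have := abs_nonneg (y (max s r₀))
    positivity
  set θ : ℝ → ℝ := fun t => ∫ s in r₀..t, E s with hθdef
  have hθd : ∀ b, HasDerivAt θ (E b) b := fun b => (hEc.integral_hasStrictDerivAt r₀ b).hasDerivAt
  have hθc : Continuous θ := (Differentiable.continuous (fun b => (hθd b).differentiableAt))
  have hθmono : Monotone θ :=
    monotone_of_deriv_nonneg (fun b => (hθd b).differentiableAt)
      (fun b => by rw [(hθd b).deriv]; exact hEnn b)
  have hθ0 : θ r₀ = 0 := integral_same
  have hθnn : ∀ r, r₀ ≤ r → 0 ≤ θ r := fun r hr => hθ0 ▸ hθmono hr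
  have hexpωc : Continuous (fun s : ℝ => exp (ω*s)) :=
    Real.continuous_exp.comp (continuous_const.mul continuous_id)
  set Q : ℝ → ℝ := fun t => ∫ s in r₀..t, exp (ω*s) with hQdef
  have hQd : ∀ b, HasDerivAt Q (exp (ω*b)) b :=
    fun b => (hexpωc.integral_hasStrictDerivAt r₀ b).hasDerivAt
  have hQc : Continuous Q := (Differentiable.continuous (fun b => (hQd b).differentiableAt))
  have hQnn : ∀ s, r₀ ≤ s → 0 ≤ Q s :=
    fun s hs => integral_nonneg hs (fun t _ => (exp_pos _).le)
  set RQ : ℝ → ℝ := fun t => ∫ s in r₀..t, Q s with hRQdef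
  have hRQc : Continuous RQ := by
    have : ∀ b, HasDerivAt RQ (Q b) b := fun b => (hQc.integral_hasStrictDerivAt r₀ b).hasDerivAt
    exact (Differentiable.continuous (fun b => (this b).differentiableAt))
  have hRQnn : ∀ s, r₀ ≤ s → 0 ≤ RQ s :=
    fun s hs => integral_nonneg hs (fun t ht => hQnn t ht.1)
  set A : ℝ → ℝ := fun s => U₀ + M * Q s with hAdef
  have hAc : Continuous A := continuous_const.add (continuous_const.mul hQc)
  have hAnn : ∀ s, r₀ ≤ s → 0 ≤ A s := by
    intro s hs
    have := hQnn s hs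
    simp only [hAdef]
    nlinarith
  set IA : ℝ → ℝ := fun s => U₀*(s - r₀) + M * RQ s with hIAdef
  have hIAnn : ∀ s, r₀ ≤ s → 0 ≤ IA s := by
    intro s hs
    have := hRQnn s hs
    simp only [hIAdef]
    nlinarith
  -- FTC facts
  have hy'on : ∀ r, ContinuousOn y' (Set.Icc r₀ r) :=
    fun r s hs => ((hy' s hs.1).continuousAt).continuousWithinAt
  have hy''eq : ∀ s, r₀ ≤ s →
      y'' s = exp (ω*s)*b₃ s - exp (-a*s)*b₁ s * y' s - exp (-a*s)*b₂ s * y s := by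
    intro s hs
    have := heq s hs
    linarith
  have hy''on : ∀ r, ContinuousOn y'' (Set.Icc r₀ r) := by
    intro r
    have hgc : Continuous (fun s => exp (ω*s)*b₃ s - exp (-a*s)*b₁ s * y' (max s r₀)
        - exp (-a*s)*b₂ s * y (max s r₀)) := by
      have e1 : Continuous (fun s : ℝ => exp (-a*s)) :=
        Real.continuous_exp.comp (continuous_const.mul continuous_id)
      exact ((hexpωc.mul hb₃.continuous).sub ((e1.mul hb₁.continuous).mul hy'm)).sub
        ((e1.mul hb₂.continuous).mul hym)
    apply hgc.continuousOn.congr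
    intro s hs
    simp only [hy''eq s hs.1, max_eq_left hs.1]
  have hFTC2 : ∀ r, r₀ ≤ r → y' r = y' r₀ + ∫ s in r₀..r, y'' s := by
    intro r hr
    have h1 : ∫ s in r₀..r, y'' s = y' r - y' r₀ := by
      apply integral_eq_sub_of_hasDerivAt
      · intro x hx
        rw [Set.uIcc_of_le hr] at hx
        exact hy' x hx.1
      · apply ContinuousOn.intervalIntegrable
        rw [Set.uIcc_of_le hr]
        exact hy''on r
    linarith
  have hFTC1 : ∀ r, r₀ ≤ r → y r = y r₀ + ∫ s in r₀..r, y' s := by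
    intro r hr
    have h1 : ∫ s in r₀..r, y' s = y r - y r₀ := by
      apply integral_eq_sub_of_hasDerivAt
      · intro x hx
        rw [Set.uIcc_of_le hr] at hx
        exact hy x hx.1
      · apply ContinuousOn.intervalIntegrable
        rw [Set.uIcc_of_le hr]
        exact hy'on r
    linarith
  -- pointwise bound on y''
  have hbE : ∀ s, r₀ ≤ s → |y'' s| ≤ M * exp (ω*s) + E s := by
    intro s hs
    rw [hy''eq s hs]
    have h1 := hb₁M s hs
    have h2 := hb₂M s hs
    have h3 := hb₃M s hs
    have e1 : (0:ℝ) < exp (-a*s) := exp_pos _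
    have e2 : (0:ℝ) < exp (ω*s) := exp_pos _
    have habs : |exp (ω*s)*b₃ s - exp (-a*s)*b₁ s * y' s - exp (-a*s)*b₂ s * y s|
        ≤ |exp (ω*s)*b₃ s| + |exp (-a*s)*b₁ s * y' s| + |exp (-a*s)*b₂ s * y s| := by
      rw [abs_le]
      constructor <;>
        nlinarith [le_abs_self (exp (ω*s)*b₃ s), neg_abs_le (exp (ω*s)*b₃ s),
          le_abs_self (exp (-a*s)*b₁ s * y' s), neg_abs_le (exp (-a*s)*b₁ s * y' s),
          le_abs_self (exp (-a*s)*b₂ s * y s), neg_abs_le (exp (-a*s)*b₂ s * y s)]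
    have hb3 : |exp (ω*s)*b₃ s| ≤ exp (ω*s) * M := by
      rw [abs_mul, abs_of_pos e2]
      exact mul_le_mul_of_nonneg_left h3 e2.le
    have hb1 : |exp (-a*s)*b₁ s * y' s| ≤ exp (-a*s) * M * |y' s| := by
      rw [abs_mul, abs_mul, abs_of_pos e1]
      have h4 : |b₁ s| * |y' s| ≤ M * |y' s| := mul_le_mul_of_nonneg_right h1 (abs_nonneg _)
      nlinarith [abs_nonneg (y' s)]
    have hb2' : |exp (-a*s)*b₂ s * y s| ≤ exp (-a*s) * M * |y s| := by
      rw [abs_mul, abs_mul, abs_of_pos e1]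
      have h4 : |b₂ s| * |y s| ≤ M * |y s| := mul_le_mul_of_nonneg_right h2 (abs_nonneg _)
      nlinarith [abs_nonneg (y s)]
    have hEs : E s = M * exp (-a*s) * (|y' s| + |y s|) := by
      simp only [hEdef, max_eq_left hs]
    rw [hEs]
    nlinarith
  have hu_bound : ∀ r, r₀ ≤ r → |y' r| ≤ A r + θ r := by
    intro r hr
    rw [hFTC2 r hr]
    have h1 : |∫ s in r₀..r, y'' s| ≤ ∫ s in r₀..r, |y'' s| := abs_integral_le_integral_abs hr
    have hi1 : IntervalIntegrable (fun s => |y'' s|) MeasureTheory.volume r₀ r := by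
      apply ContinuousOn.intervalIntegrable
      rw [Set.uIcc_of_le hr]
      exact (hy''on r).abs
    have hi2 : IntervalIntegrable (fun s => M * exp (ω*s) + E s) MeasureTheory.volume r₀ r :=
      ((continuous_const.mul hexpωc).add hEc).intervalIntegrable _ _
    have h2 : ∫ s in r₀..r, |y'' s| ≤ ∫ s in r₀..r, (M * exp (ω*s) + E s) :=
      integral_mono_on hr hi1 hi2 (fun s hs => hbE s hs.1)
    have h3 : ∫ s in r₀..r, (M * exp (ω*s) + E s) = M * Q r + θ r := by
      rw [integral_add (f := fun s => M * exp (ω*s)) ((continuous_const.mul hexpωc).intervalIntegrable _ _)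
        (hEc.intervalIntegrable _ _), integral_const_mul]
    calc |y' r₀ + ∫ s in r₀..r, y'' s| ≤ |y' r₀| + |∫ s in r₀..r, y'' s| := abs_add_le _ _
      _ ≤ |y' r₀| + (M * Q r + θ r) := add_le_add le_rfl (h1.trans (h2.trans_eq h3))
      _ = A r + θ r := by simp only [hAdef, hU₀def]; ring
  have hAθi : ∀ x z : ℝ, IntervalIntegrable (fun s => A s + θ s) MeasureTheory.volume x z :=
    fun x z => (hAc.add hθc).intervalIntegrable x z
  have hYint : ∀ r, r₀ ≤ r → |y r| ≤ Y₀ + ∫ s in r₀..r, (A s + θ s) := by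
    intro r hr
    rw [hFTC1 r hr]
    have h1 : |∫ s in r₀..r, y' s| ≤ ∫ s in r₀..r, |y' s| := abs_integral_le_integral_abs hr
    have hi1 : IntervalIntegrable (fun s => |y' s|) MeasureTheory.volume r₀ r := by
      apply ContinuousOn.intervalIntegrable
      rw [Set.uIcc_of_le hr]
      exact (hy'on r).abs
    have h2 : ∫ s in r₀..r, |y' s| ≤ ∫ s in r₀..r, (A s + θ s) :=
      integral_mono_on hr hi1 (hAθi _ _) (fun s hs => hu_bound s hs.1)
    calc |y r₀ + ∫ s in r₀..r, y' s| ≤ |y r₀| + |∫ s in r₀..r, y' s| := abs_add_le _ _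
      _ ≤ Y₀ + ∫ s in r₀..r, (A s + θ s) := add_le_add (le_of_eq hY₀def.symm) (h1.trans h2)
  have hIAint : ∀ r, r₀ ≤ r → ∫ s in r₀..r, A s = IA r := by
    intro r _
    simp only [hAdef, hIAdef]
    rw [integral_add (g := fun s => M * Q s) intervalIntegrable_const ((continuous_const.mul hQc).intervalIntegrable _ _),
      integral_const, integral_const_mul]
    simp only [smul_eq_mul]
    ring
  have hY_bound : ∀ r, r₀ ≤ r → |y r| ≤ Y₀ + IA r + (r - r₀) * θ r := by
    intro r hr
    have h1 := hYint r hr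
    have h2 : ∫ s in r₀..r, (A s + θ s) ≤ ∫ s in r₀..r, (A s + θ r) := by
      apply integral_mono_on hr (hAθi _ _) ((hAc.add continuous_const).intervalIntegrable _ _)
      intro s hs
      exact add_le_add le_rfl (hθmono hs.2)
    have h3 : ∫ s in r₀..r, (A s + θ r) = IA r + (r - r₀) * θ r := by
      rw [integral_add (hAc.intervalIntegrable _ _) intervalIntegrable_const,
        hIAint r hr, integral_const]
      simp [smul_eq_mul, mul_comm]
    linarith
  set k : ℝ → ℝ := fun s => M * exp (-a*s) * (1 + (s - r₀)) with hkdef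
  set G : ℝ → ℝ := fun s => M * exp (-a*s) * (A s + Y₀ + IA s) with hGdef
  have hexpac : Continuous (fun s : ℝ => exp (-a*s)) :=
    Real.continuous_exp.comp (continuous_const.mul continuous_id)
  have hkc : Continuous k :=
    (continuous_const.mul hexpac).mul (continuous_const.add (continuous_id.sub continuous_const))
  have hIAc : Continuous IA :=
    (continuous_const.mul (continuous_id.sub continuous_const)).add (continuous_const.mul hRQc)
  have hGc : Continuous G :=
    (continuous_const.mul hexpac).mul ((hAc.add continuous_const).add hIAc)
  have hknn : ∀ s, r₀ ≤ s → 0 ≤ k s := by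
    intro s hs
    simp only [hkdef]
    have h0 := exp_pos (-a*s)
    have : (0:ℝ) ≤ 1 + (s - r₀) := by linarith
    positivity
  have hGnn : ∀ s, r₀ ≤ s → 0 ≤ G s := by
    intro s hs
    simp only [hGdef]
    have h0 := exp_pos (-a*s)
    have h1 := hAnn s hs
    have h2 := hIAnn s hs
    have : (0:ℝ) ≤ A s + Y₀ + IA s := by linarith
    positivity
  have hEkG : ∀ s, r₀ ≤ s → E s ≤ k s * θ s + G s := by
    intro s hs
    have h1 : |y' s| ≤ A s + θ s := hu_bound s hs
    have h2 : |y s| ≤ Y₀ + IA s + (s - r₀) * θ s := hY_bound s hs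
    have hEs : E s = M * exp (-a*s) * (|y' s| + |y s|) := by
      simp only [hEdef, max_eq_left hs]
    rw [hEs]
    simp only [hkdef, hGdef]
    calc M * exp (-a*s) * (|y' s| + |y s|)
        ≤ M * exp (-a*s) * ((A s + θ s) + (Y₀ + IA s + (s - r₀) * θ s)) :=
          mul_le_mul_of_nonneg_left (add_le_add h1 h2) (by positivity)
      _ = (M * exp (-a*s) * (1 + (s - r₀))) * θ s + M * exp (-a*s) * (A s + Y₀ + IA s) := by ring
  have hgron := gronwall_aux hkc hGc hθd hθ0 hknn hGnn hEkG
  set K₀ : ℝ := (2*M/a)*(1+2/a)*exp (-a*r₀) with hK₀def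
  have hexpa2c : Continuous (fun s : ℝ => exp (-(a/2)*s)) :=
    Real.continuous_exp.comp (continuous_const.mul continuous_id)
  have hIexp : ∀ r, r₀ ≤ r →
      ∫ s in r₀..r, exp (-(a/2)*s) ≤ (2/a) * exp (-(a/2)*r₀) := by
    intro r hr
    rw [intExp _ _ _ (ne_of_lt (by linarith : -(a/2) < (0:ℝ)))]
    rw [div_le_iff_of_neg (by linarith : -(a/2) < 0)]
    have e1 := exp_pos (-(a/2)*r)
    have e2 := exp_pos (-(a/2)*r₀)
    have h4 : (2/a) * (a/2) = 1 := by field_simp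
    nlinarith
  have hKb : ∀ r, r₀ ≤ r → ∫ s in r₀..r, k s ≤ K₀ := by
    intro r hr
    have hcK : (0:ℝ) ≤ M*(1+2/a)*exp (-(a/2)*r₀) := by positivity
    have h1 : ∀ s ∈ Set.Icc r₀ r, k s ≤ (M*(1+2/a)*exp (-(a/2)*r₀)) * exp (-(a/2)*s) := by
      intro s hs
      simp only [hkdef]
      have hx : (0:ℝ) ≤ s - r₀ := by linarith [hs.1]
      have hb2 : (0:ℝ) < a/2 := by linarith
      have l1 : (s - r₀) ≤ (1/(a/2)) * exp ((a/2)*(s-r₀)) := lin_le_exp' hb2 hx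
      have l1' : (1:ℝ)/(a/2) = 2/a := by field_simp
      have l2 : (1:ℝ) ≤ exp ((a/2)*(s-r₀)) := one_le_exp (by positivity)
      have l3 : 1 + (s - r₀) ≤ (1 + 2/a) * exp ((a/2)*(s-r₀)) := by
        rw [l1'] at l1
        nlinarith
      have l4 : exp (-a*s) * exp ((a/2)*(s-r₀)) = exp (-(a/2)*r₀) * exp (-(a/2)*s) := by
        rw [← exp_add, ← exp_add]
        congr 1
        ring
      calc M * exp (-a*s) * (1 + (s - r₀))
          ≤ M * exp (-a*s) * ((1 + 2/a) * exp ((a/2)*(s-r₀))) :=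
            mul_le_mul_of_nonneg_left l3 (by positivity)
        _ = M * (1 + 2/a) * (exp (-a*s) * exp ((a/2)*(s-r₀))) := by ring
        _ = (M*(1+2/a)*exp (-(a/2)*r₀)) * exp (-(a/2)*s) := by rw [l4]; ring
    have h2 : ∫ s in r₀..r, k s
        ≤ ∫ s in r₀..r, (M*(1+2/a)*exp (-(a/2)*r₀)) * exp (-(a/2)*s) :=
      integral_mono_on hr (hkc.intervalIntegrable _ _)
        ((continuous_const.mul hexpa2c).intervalIntegrable _ _) h1
    have h3 : ∫ s in r₀..r, (M*(1+2/a)*exp (-(a/2)*r₀)) * exp (-(a/2)*s)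
        = (M*(1+2/a)*exp (-(a/2)*r₀)) * ∫ s in r₀..r, exp (-(a/2)*s) := by
      rw [integral_const_mul]
    have h5 : (M*(1+2/a)*exp (-(a/2)*r₀)) * ((2/a) * exp (-(a/2)*r₀)) = K₀ := by
      simp only [hK₀def]
      rw [show exp (-a*r₀) = exp (-(a/2)*r₀) * exp (-(a/2)*r₀) by
        rw [← exp_add]; congr 1; ring]
      ring
    calc ∫ s in r₀..r, k s ≤ _ := h2
      _ = _ := h3
      _ ≤ (M*(1+2/a)*exp (-(a/2)*r₀)) * ((2/a) * exp (-(a/2)*r₀)) :=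
          mul_le_mul_of_nonneg_left (hIexp r hr) hcK
      _ = K₀ := h5
  have hgnn : ∀ r, r₀ ≤ r → 0 ≤ ∫ s in r₀..r, G s :=
    fun r hr => integral_nonneg hr (fun t ht => hGnn t ht.1)
  have hθle : ∀ r, r₀ ≤ r → θ r ≤ exp K₀ * ∫ s in r₀..r, G s := by
    intro r hr
    calc θ r ≤ exp (∫ s in r₀..r, k s) * ∫ s in r₀..r, G s := hgron r hr
      _ ≤ exp K₀ * ∫ s in r₀..r, G s :=
          mul_le_mul_of_nonneg_right (exp_le_exp.2 (hKb r hr)) (hgnn r hr)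
  -- generic bound on ∫ G when A + Y₀ + IA has a polynomial bound
  have hGsmall : ∀ c₁ c₂ c₃ : ℝ, 0 ≤ c₁ → 0 ≤ c₂ → 0 ≤ c₃ →
      (∀ s, r₀ ≤ s → A s + Y₀ + IA s ≤ c₁ + c₂*(s-r₀) + c₃*(s-r₀)^2) →
      ∀ r, r₀ ≤ r → ∫ s in r₀..r, G s
        ≤ (M*(c₁+(2/a)*c₂+(16/a^2)*c₃)*exp (-(a/2)*r₀)) * ((2/a) * exp (-(a/2)*r₀)) := by
    intro c₁ c₂ c₃ hc₁ hc₂ hc₃ hbound r hr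
    have hS : (0:ℝ) ≤ c₁+(2/a)*c₂+(16/a^2)*c₃ := by
      have u1 : (0:ℝ) ≤ (2/a)*c₂ := mul_nonneg (by positivity) hc₂
      have u2 : (0:ℝ) ≤ (16/a^2)*c₃ := mul_nonneg (by positivity) hc₃
      linarith
    have hcc : (0:ℝ) ≤ M*(c₁+(2/a)*c₂+(16/a^2)*c₃)*exp (-(a/2)*r₀) :=
      mul_nonneg (mul_nonneg hM.le hS) (exp_pos _).le
    have h1 : ∀ s ∈ Set.Icc r₀ r, G s
        ≤ (M*(c₁+(2/a)*c₂+(16/a^2)*c₃)*exp (-(a/2)*r₀)) * exp (-(a/2)*s) := by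
      intro s hs
      have hx : (0:ℝ) ≤ s - r₀ := by linarith [hs.1]
      have hb2 : (0:ℝ) < a/2 := by linarith
      have hb4 : (0:ℝ) < a/4 := by linarith
      have l1 : (s - r₀) ≤ (2/a) * exp ((a/2)*(s-r₀)) := by
        have h := lin_le_exp' hb2 hx
        have h' : (1:ℝ)/(a/2) = 2/a := by field_simp
        rw [h'] at h
        exact h
      have l2 : (1:ℝ) ≤ exp ((a/2)*(s-r₀)) := one_le_exp (by positivity)
      have l5 : (s - r₀) ≤ (4/a) * exp ((a/4)*(s-r₀)) := by
        have h := lin_le_exp' hb4 hx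
        have h' : (1:ℝ)/(a/4) = 4/a := by field_simp
        rw [h'] at h
        exact h
      have l6 : (s - r₀)^2 ≤ (16/a^2) * exp ((a/2)*(s-r₀)) := by
        have hsq : (s-r₀)^2 ≤ ((4/a) * exp ((a/4)*(s-r₀)))^2 :=
          pow_le_pow_left₀ hx l5 2
        have he : (a/4)*(s-r₀) + (a/4)*(s-r₀) = (a/2)*(s-r₀) := by ring
        calc (s-r₀)^2 ≤ ((4/a) * exp ((a/4)*(s-r₀)))^2 := hsq
          _ = (16/a^2) * (exp ((a/4)*(s-r₀)) * exp ((a/4)*(s-r₀))) := by ring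
          _ = (16/a^2) * exp ((a/2)*(s-r₀)) := by rw [← exp_add, he]
      have l3 : A s + Y₀ + IA s ≤ (c₁+(2/a)*c₂+(16/a^2)*c₃) * exp ((a/2)*(s-r₀)) := by
        have h := hbound s hs.1
        have t1 := mul_le_mul_of_nonneg_left l1 hc₂
        have t2 := mul_le_mul_of_nonneg_left l6 hc₃
        have t3 := mul_le_mul_of_nonneg_left l2 hc₁
        calc A s + Y₀ + IA s ≤ c₁ + c₂*(s-r₀) + c₃*(s-r₀)^2 := h
          _ ≤ c₁ * exp ((a/2)*(s-r₀)) + c₂*((2/a)*exp ((a/2)*(s-r₀)))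
              + c₃*((16/a^2)*exp ((a/2)*(s-r₀))) := by linarith
          _ = (c₁+(2/a)*c₂+(16/a^2)*c₃) * exp ((a/2)*(s-r₀)) := by ring
      have l4 : exp (-a*s) * exp ((a/2)*(s-r₀)) = exp (-(a/2)*r₀) * exp (-(a/2)*s) := by
        rw [← exp_add, ← exp_add]
        congr 1
        ring
      have hGs : G s = M * exp (-a*s) * (A s + Y₀ + IA s) := by simp only [hGdef]
      rw [hGs]
      calc M * exp (-a*s) * (A s + Y₀ + IA s)
          ≤ M * exp (-a*s) * ((c₁+(2/a)*c₂+(16/a^2)*c₃) * exp ((a/2)*(s-r₀))) :=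
            mul_le_mul_of_nonneg_left l3 (by positivity)
        _ = M * (c₁+(2/a)*c₂+(16/a^2)*c₃) * (exp (-a*s) * exp ((a/2)*(s-r₀))) := by ring
        _ = _ := by rw [l4]; ring
    have h2 : ∫ s in r₀..r, G s
        ≤ ∫ s in r₀..r, (M*(c₁+(2/a)*c₂+(16/a^2)*c₃)*exp (-(a/2)*r₀)) * exp (-(a/2)*s) :=
      integral_mono_on hr (hGc.intervalIntegrable _ _)
        ((continuous_const.mul hexpa2c).intervalIntegrable _ _) h1
    calc ∫ s in r₀..r, G s ≤ _ := h2
      _ = (M*(c₁+(2/a)*c₂+(16/a^2)*c₃)*exp (-(a/2)*r₀)) * ∫ s in r₀..r, exp (-(a/2)*s) := by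
          rw [integral_const_mul]
      _ ≤ _ := mul_le_mul_of_nonneg_left (hIexp r hr) hcc
  refine ⟨?_, ?_, ?_⟩
  · -- case ω < 0
    intro hw
    have hwne : ω ≠ 0 := ne_of_lt hw
    set q₀ : ℝ := exp (ω*r₀)/(-ω) with hq₀def
    have hq₀ : 0 ≤ q₀ := div_nonneg (exp_pos _).le (by linarith)
    have hQb : ∀ s, r₀ ≤ s → Q s ≤ q₀ := by
      intro s _
      have h0 : Q s = (exp (ω*s) - exp (ω*r₀))/ω := by
        simp only [hQdef]
        exact intExp ω r₀ s hwne
      have h1 : (exp (ω*s) - exp (ω*r₀))/ω = (exp (ω*r₀) - exp (ω*s))/(-ω) := by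
        rw [div_eq_div_iff hwne (neg_ne_zero.2 hwne)]
        ring
      rw [h0, h1, hq₀def]
      exact (div_le_div_iff_of_pos_right (by linarith : (0:ℝ) < -ω)).2 (by linarith [exp_pos (ω*s)])
    have hRQb : ∀ s, r₀ ≤ s → RQ s ≤ q₀ * (s - r₀) := by
      intro s hs
      have h0 : (∫ t in r₀..s, Q t) ≤ ∫ t in r₀..s, q₀ :=
        integral_mono_on hs (hQc.intervalIntegrable _ _) intervalIntegrable_const
          (fun t ht => hQb t ht.1)
      have h1 : ∫ t in r₀..s, (q₀:ℝ) = (s - r₀) * q₀ := by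
        rw [integral_const]; simp [smul_eq_mul]
      simp only [hRQdef]
      rw [h1] at h0
      linarith [h0]
    have hbd : ∀ s, r₀ ≤ s → A s + Y₀ + IA s
        ≤ (U₀+M*q₀+Y₀) + (U₀+M*q₀)*(s-r₀) + 0*(s-r₀)^2 := by
      intro s hs
      have h1 := hQb s hs
      have h2 := hRQb s hs
      simp only [hAdef, hIAdef]
      nlinarith [mul_le_mul_of_nonneg_left h1 hM.le, mul_le_mul_of_nonneg_left h2 hM.le]
    have hc₁ : (0:ℝ) ≤ U₀+M*q₀+Y₀ := by nlinarith
    have hc₂' : (0:ℝ) ≤ U₀+M*q₀ := by nlinarith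
    have hgb := hGsmall _ _ _ hc₁ hc₂' le_rfl hbd
    set Dg : ℝ := (M*((U₀+M*q₀+Y₀)+(2/a)*(U₀+M*q₀)+(16/a^2)*0)*exp (-(a/2)*r₀))
      * ((2/a) * exp (-(a/2)*r₀)) with hDgdef
    have hDgnn : 0 ≤ Dg := by
      rw [hDgdef]
      have u1 : (0:ℝ) ≤ (2/a)*(U₀+M*q₀) := mul_nonneg (by positivity) hc₂'
      apply mul_nonneg (mul_nonneg (mul_nonneg hM.le (by linarith)) (exp_pos _).le)
      positivity
    have hθb : ∀ s, r₀ ≤ s → θ s ≤ exp K₀ * Dg := by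
      intro s hs
      calc θ s ≤ exp K₀ * ∫ t in r₀..s, G t := hθle s hs
        _ ≤ exp K₀ * Dg := mul_le_mul_of_nonneg_left (hgb s hs) (exp_pos _).le
    refine ⟨Y₀ + (U₀ + M*q₀ + exp K₀ * Dg) * (1+|r₀|), ?_⟩
    intro r hr
    have h1 := hYint r hr
    have h2 : ∫ s in r₀..r, (A s + θ s) ≤ ∫ s in r₀..r, (U₀ + M*q₀ + exp K₀ * Dg) := by
      apply integral_mono_on hr (hAθi _ _) intervalIntegrable_const
      intro s hs
      have h3 := hQb s hs.1
      have h4 := hθb s hs.1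
      simp only [hAdef]
      nlinarith [mul_le_mul_of_nonneg_left h3 hM.le]
    rw [integral_const] at h2
    simp only [smul_eq_mul] at h2
    have hcnn : (0:ℝ) ≤ U₀ + M*q₀ + exp K₀ * Dg := by
      nlinarith [mul_nonneg (exp_pos K₀).le hDgnn]
    have ha1 : r - r₀ ≤ |r| + |r₀| := by
      have := le_abs_self r
      have := neg_abs_le r₀
      linarith
    have ha2 : (0:ℝ) ≤ |r| := abs_nonneg r
    have ha3 : (0:ℝ) ≤ |r₀| := abs_nonneg r₀
    nlinarith [mul_le_mul_of_nonneg_left ha1 hcnn, mul_nonneg (mul_nonneg hcnn ha3) ha2,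
      mul_nonneg hY₀nn ha2]
  · -- case ω = 0
    intro hw
    subst hw
    have hQ0 : ∀ s, Q s = s - r₀ := by
      intro s
      simp only [hQdef]
      simp [integral_const]
    have hRQb : ∀ s, r₀ ≤ s → RQ s ≤ (s - r₀)^2 := by
      intro s hs
      have h0 : (∫ t in r₀..s, Q t) ≤ ∫ t in r₀..s, (s - r₀) := by
        apply integral_mono_on hs (hQc.intervalIntegrable _ _) intervalIntegrable_const
        intro t ht
        rw [hQ0 t]
        linarith [ht.2]
      have h1 : ∫ t in r₀..s, (s - r₀ : ℝ) = (s - r₀) * (s - r₀) := by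
        rw [integral_const]; simp [smul_eq_mul]
      simp only [hRQdef]
      rw [h1] at h0
      nlinarith [h0]
    have hbd : ∀ s, r₀ ≤ s → A s + Y₀ + IA s
        ≤ (U₀+Y₀) + (M+U₀)*(s-r₀) + M*(s-r₀)^2 := by
      intro s hs
      have h2 := hRQb s hs
      simp only [hAdef, hIAdef, hQ0 s]
      nlinarith [mul_le_mul_of_nonneg_left h2 hM.le]
    have hc₁ : (0:ℝ) ≤ U₀+Y₀ := by linarith
    have hc₂' : (0:ℝ) ≤ M+U₀ := by linarith
    have hgb := hGsmall _ _ _ hc₁ hc₂' hM.le hbd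
    set Dg : ℝ := (M*((U₀+Y₀)+(2/a)*(M+U₀)+(16/a^2)*M)*exp (-(a/2)*r₀))
      * ((2/a) * exp (-(a/2)*r₀)) with hDgdef
    have hDgnn : 0 ≤ Dg := by
      rw [hDgdef]
      have u1 : (0:ℝ) ≤ (2/a)*(M+U₀) := mul_nonneg (by positivity) hc₂'
      have u2 : (0:ℝ) ≤ (16/a^2)*M := mul_nonneg (by positivity) hM.le
      apply mul_nonneg (mul_nonneg (mul_nonneg hM.le (by linarith)) (exp_pos _).le)
      positivity
    have hθb : ∀ s, r₀ ≤ s → θ s ≤ exp K₀ * Dg := by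
      intro s hs
      calc θ s ≤ exp K₀ * ∫ t in r₀..s, G t := hθle s hs
        _ ≤ exp K₀ * Dg := mul_le_mul_of_nonneg_left (hgb s hs) (exp_pos _).le
    refine ⟨Y₀ + (U₀ + exp K₀ * Dg) * (1+|r₀|) + M * (1+|r₀|)^2, ?_⟩
    intro r hr
    have h1 := hYint r hr
    have h2 : ∫ s in r₀..r, (A s + θ s)
        ≤ ∫ s in r₀..r, ((U₀ + exp K₀ * Dg) + M*(r - r₀)) := by
      apply integral_mono_on hr (hAθi _ _) intervalIntegrable_const
      intro s hs
      have h4 := hθb s hs.1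
      simp only [hAdef, hQ0 s]
      nlinarith [mul_le_mul_of_nonneg_left (show s - r₀ ≤ r - r₀ by linarith [hs.2]) hM.le]
    rw [integral_const] at h2
    simp only [smul_eq_mul] at h2
    have hc₄nn : (0:ℝ) ≤ U₀ + exp K₀ * Dg := by
      nlinarith [mul_nonneg (exp_pos K₀).le hDgnn]
    have ha1 : r - r₀ ≤ (1+|r₀|) * (1+|r|) := by
      have h5 := le_abs_self r
      have h6 := neg_abs_le r₀
      nlinarith [abs_nonneg r, abs_nonneg r₀, mul_nonneg (abs_nonneg r₀) (abs_nonneg r)]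
    have ha0 : (0:ℝ) ≤ r - r₀ := by linarith
    have ha2 : (r - r₀)^2 ≤ ((1+|r₀|) * (1+|r|))^2 := pow_le_pow_left₀ ha0 ha1 2
    have hb1 : (1:ℝ) ≤ (1+|r|)^2 := by nlinarith [abs_nonneg r]
    have hb2 : (1+|r₀|) * (1+|r|) ≤ (1+|r₀|) * (1+|r|)^2 := by
      nlinarith [abs_nonneg r, abs_nonneg r₀, mul_nonneg (abs_nonneg r₀) (abs_nonneg r)]
    nlinarith [mul_le_mul_of_nonneg_left ha1 hc₄nn, mul_le_mul_of_nonneg_left hb2 hc₄nn,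
      mul_le_mul_of_nonneg_left ha2 hM.le, mul_le_mul_of_nonneg_left hb1 hY₀nn,
      mul_le_mul_of_nonneg_left ha1 hM.le, mul_nonneg hM.le (mul_nonneg (abs_nonneg r₀) (abs_nonneg r))]
  · -- case 0 < ω
    intro hw
    have hwne : ω ≠ 0 := ne_of_gt hw
    have hQb : ∀ s, r₀ ≤ s → Q s ≤ exp (ω*s)/ω := by
      intro s _
      have h0 : Q s = (exp (ω*s) - exp (ω*r₀))/ω := by
        simp only [hQdef]
        exact intExp ω r₀ s hwne
      rw [h0]
      exact (div_le_div_iff_of_pos_right hw).2 (by linarith [exp_pos (ω*r₀)])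
    have hRQb : ∀ s, r₀ ≤ s → RQ s ≤ exp (ω*s)/ω^2 := by
      intro s hs
      have h1 : (∫ t in r₀..s, Q t) ≤ ∫ t in r₀..s, exp (ω*t)/ω := by
        apply integral_mono_on hs (hQc.intervalIntegrable _ _)
          ((hexpωc.div_const ω).intervalIntegrable _ _)
        exact fun t ht => hQb t ht.1
      have h2 : ∫ t in r₀..s, exp (ω*t)/ω = ((exp (ω*s) - exp (ω*r₀))/ω)/ω := by
        rw [integral_div, intExp ω r₀ s hwne]
      simp only [hRQdef]
      calc (∫ t in r₀..s, Q t) ≤ _ := h1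
        _ = ((exp (ω*s) - exp (ω*r₀))/ω)/ω := h2
        _ ≤ exp (ω*s)/ω^2 := by
            rw [div_div]
            have hsq : ω * ω = ω^2 := (sq ω).symm
            rw [hsq]
            exact (div_le_div_iff_of_pos_right (pow_pos hw 2)).2 (by linarith [exp_pos (ω*r₀)])
    set cE : ℝ := (U₀+Y₀)*exp (-(ω*r₀)) + M/ω + (U₀/ω)*exp (-(ω*r₀)) + M/ω^2 with hcEdef
    have hcEnn : 0 ≤ cE := by
      rw [hcEdef]
      have u1 : (0:ℝ) ≤ (U₀+Y₀)*exp (-(ω*r₀)) := mul_nonneg (by linarith) (exp_pos _).le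
      have u2 : (0:ℝ) ≤ M/ω := by positivity
      have u3 : (0:ℝ) ≤ (U₀/ω)*exp (-(ω*r₀)) :=
        mul_nonneg (div_nonneg hU₀nn hw.le) (exp_pos _).le
      have u4 : (0:ℝ) ≤ M/ω^2 := by positivity
      linarith
    have hone : ∀ s, r₀ ≤ s → (1:ℝ) ≤ exp (-(ω*r₀)) * exp (ω*s) := by
      intro s hs
      rw [← exp_add]
      apply one_le_exp
      nlinarith
    have hxb : ∀ s, r₀ ≤ s → s - r₀ ≤ (1/ω) * (exp (-(ω*r₀)) * exp (ω*s)) := by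
      intro s hs
      rw [← exp_add]
      have h := lin_le_exp' hw (by linarith : (0:ℝ) ≤ s - r₀)
      have he : ω*(s-r₀) = -(ω*r₀) + ω*s := by ring
      rw [he] at h
      exact h
    have hbd : ∀ s, r₀ ≤ s → A s + Y₀ + IA s ≤ cE * exp (ω*s) := by
      intro s hs
      have h1 := hQb s hs
      have h2 := hRQb s hs
      have h3 := hone s hs
      have h4 := hxb s hs
      simp only [hAdef, hIAdef, hcEdef]
      have t1 := mul_le_mul_of_nonneg_left h1 hM.le
      have t2 := mul_le_mul_of_nonneg_left h2 hM.le
      have t3 := mul_le_mul_of_nonneg_left h3 (add_nonneg hU₀nn hY₀nn)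
      have t4 := mul_le_mul_of_nonneg_left h4 hU₀nn
      calc U₀ + M * Q s + Y₀ + (U₀*(s - r₀) + M * RQ s)
          ≤ (U₀+Y₀) * (exp (-(ω*r₀)) * exp (ω*s)) + M * (exp (ω*s)/ω)
            + U₀ * ((1/ω) * (exp (-(ω*r₀)) * exp (ω*s))) + M * (exp (ω*s)/ω^2) := by
            linarith
        _ = ((U₀+Y₀)*exp (-(ω*r₀)) + M/ω + (U₀/ω)*exp (-(ω*r₀)) + M/ω^2) * exp (ω*s) := by
            field_simp
    have hGb : ∀ s, r₀ ≤ s → G s ≤ (M*exp (-a*r₀)*cE) * exp (ω*s) := by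
      intro s hs
      have h1 := hbd s hs
      have hGs : G s = M * exp (-a*s) * (A s + Y₀ + IA s) := by simp only [hGdef]
      rw [hGs]
      have e2 : exp (-a*s) ≤ exp (-a*r₀) := exp_le_exp.2 (by nlinarith)
      have hnn : (0:ℝ) ≤ cE * exp (ω*s) := mul_nonneg hcEnn (exp_pos _).le
      calc M * exp (-a*s) * (A s + Y₀ + IA s) ≤ M * exp (-a*s) * (cE * exp (ω*s)) :=
            mul_le_mul_of_nonneg_left h1 (by positivity)
        _ ≤ M * exp (-a*r₀) * (cE * exp (ω*s)) := by
            have t5 := mul_le_mul_of_nonneg_right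
              (mul_le_mul_of_nonneg_left e2 hM.le) hnn
            linarith
        _ = (M*exp (-a*r₀)*cE) * exp (ω*s) := by ring
    have hgb : ∀ s, r₀ ≤ s → ∫ t in r₀..s, G t ≤ (M*exp (-a*r₀)*cE/ω) * exp (ω*s) := by
      intro s hs
      have h1 : ∫ t in r₀..s, G t ≤ ∫ t in r₀..s, (M*exp (-a*r₀)*cE) * exp (ω*t) :=
        integral_mono_on hs (hGc.intervalIntegrable _ _)
          ((continuous_const.mul hexpωc).intervalIntegrable _ _) (fun t ht => hGb t ht.1)
      have h2 : ∫ t in r₀..s, (M*exp (-a*r₀)*cE) * exp (ω*t)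
          = (M*exp (-a*r₀)*cE) * ((exp (ω*s) - exp (ω*r₀))/ω) := by
        rw [integral_const_mul, intExp ω r₀ s hwne]
      have hc0 : (0:ℝ) ≤ M*exp (-a*r₀)*cE := by
        apply mul_nonneg (mul_nonneg hM.le (exp_pos _).le) hcEnn
      have h3 : (M*exp (-a*r₀)*cE) * ((exp (ω*s) - exp (ω*r₀))/ω)
          ≤ (M*exp (-a*r₀)*cE) * (exp (ω*s)/ω) := by
        apply mul_le_mul_of_nonneg_left _ hc0
        exact (div_le_div_iff_of_pos_right hw).2 (by linarith [exp_pos (ω*r₀)])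
      calc ∫ t in r₀..s, G t ≤ _ := h1
        _ = _ := h2
        _ ≤ (M*exp (-a*r₀)*cE) * (exp (ω*s)/ω) := h3
        _ = (M*exp (-a*r₀)*cE/ω) * exp (ω*s) := by ring
    set c₆ : ℝ := U₀*exp (-(ω*r₀)) + M/ω + exp K₀ * (M*exp (-a*r₀)*cE/ω) with hc₆def
    have hc₆nn : 0 ≤ c₆ := by
      rw [hc₆def]
      have u1 : (0:ℝ) ≤ U₀*exp (-(ω*r₀)) := mul_nonneg hU₀nn (exp_pos _).le
      have u2 : (0:ℝ) ≤ M/ω := by positivity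
      have u3 : (0:ℝ) ≤ exp K₀ * (M*exp (-a*r₀)*cE/ω) := by
        apply mul_nonneg (exp_pos _).le
        apply div_nonneg _ hw.le
        exact mul_nonneg (mul_nonneg hM.le (exp_pos _).le) hcEnn
      linarith
    have hAθb : ∀ s, r₀ ≤ s → A s + θ s ≤ c₆ * exp (ω*s) := by
      intro s hs
      have h1 := hQb s hs
      have h3 := hone s hs
      have hθs : θ s ≤ exp K₀ * ((M*exp (-a*r₀)*cE/ω) * exp (ω*s)) := by
        calc θ s ≤ exp K₀ * ∫ t in r₀..s, G t := hθle s hs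
          _ ≤ _ := mul_le_mul_of_nonneg_left (hgb s hs) (exp_pos _).le
      simp only [hAdef, hc₆def]
      have t1 := mul_le_mul_of_nonneg_left h1 hM.le
      have t3 := mul_le_mul_of_nonneg_left h3 hU₀nn
      calc U₀ + M * Q s + θ s
          ≤ U₀ * (exp (-(ω*r₀)) * exp (ω*s)) + M * (exp (ω*s)/ω)
            + exp K₀ * ((M*exp (-a*r₀)*cE/ω) * exp (ω*s)) := by linarith
        _ = (U₀*exp (-(ω*r₀)) + M/ω + exp K₀ * (M*exp (-a*r₀)*cE/ω)) * exp (ω*s) := by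
            field_simp
    refine ⟨Y₀*exp (-(ω*r₀)) + c₆/ω, ?_⟩
    intro r hr
    have h1 := hYint r hr
    have h2 : ∫ s in r₀..r, (A s + θ s) ≤ ∫ s in r₀..r, c₆ * exp (ω*s) :=
      integral_mono_on hr (hAθi _ _) ((continuous_const.mul hexpωc).intervalIntegrable _ _)
        (fun s hs => hAθb s hs.1)
    have h3 : ∫ s in r₀..r, c₆ * exp (ω*s) = c₆ * ((exp (ω*r) - exp (ω*r₀))/ω) := by
      rw [integral_const_mul, intExp ω r₀ r hwne]
    have h4 : c₆ * ((exp (ω*r) - exp (ω*r₀))/ω) ≤ c₆ * (exp (ω*r)/ω) := by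
      apply mul_le_mul_of_nonneg_left _ hc₆nn
      exact (div_le_div_iff_of_pos_right hw).2 (by linarith [exp_pos (ω*r₀)])
    have h5 := hone r hr
    have t6 := mul_le_mul_of_nonneg_left h5 hY₀nn
    have heq6 : (Y₀*exp (-(ω*r₀)) + c₆/ω) * exp (ω*r)
        = Y₀ * (exp (-(ω*r₀)) * exp (ω*r)) + c₆ * (exp (ω*r)/ω) := by
      field_simp
    rw [heq6]
    rw [h3] at h2
    linarith
end

section
/- Consider the coupled linear system u' = c e^{−ar} u + c e^{(2−a)r} v + c e^{(3−a)r}, v' = c e^{−2r} u + c e^{−ar} v on [r₀, ∞), with constant c > 0 and 0 < a < 2. Then every solution satisfies u = O(e^{(3−a)r}), and v = O(e^{(1−a)r}) if 0 < a < 1, v = O(r) if a = 1, and v = O(1) if a > 1. -/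
/-!
With `U = u e^{(a-3)r}` and `V = v e^{-r}` the system becomes
`U' = (ε - (3 - a)) U + c V + c`, `V' = ε U + (ε - 1) V` with `ε = c e^{-ar} → 0`:
a stable triangular system plus a vanishing perturbation. For a suitable weight `ω` the energy
`U² + ω V²` eventually satisfies `E' ≤ -δ E + K`, so it stays bounded, which is the bound on `u`.
Then `v' = c e^{-ar} v + g` with `|g| = O(e^{(1-a)r})`; the integrating factor
`exp (c / a · e^{-ar})` is bounded above and below on `[r₀, ∞)`, and integrating `e^{(1-a)r}`
gives the three growth rates of `v`.
-/

open Real Set Filter Topology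

theorem bddAbove_image_Ici_of_deriv_le_neg_mul_add {f f' : ℝ → ℝ} {r₀ δ K : ℝ} (hδ : 0 < δ)
    (hf : ∀ r ≥ r₀, HasDerivAt f (f' r) r) (hdiss : ∀ᶠ r in atTop, f' r ≤ -δ * f r + K) :
    BddAbove (f '' Ici r₀) := by
  obtain ⟨r₁, hr₁⟩ := eventually_atTop.1 hdiss
  set R := max r₀ r₁
  have hcont : ContinuousOn f (Ici r₀) := fun x hx => (hf x hx).continuousAt.continuousWithinAt
  -- at the level `K / δ + 1` the derivative is negative, so `f` cannot cross it
  have tail : ∀ r ≥ R, f r ≤ max (f R) (K / δ + 1) := by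
    intro r hr
    refine image_le_of_deriv_right_lt_deriv_boundary
      (B := fun _ => max (f R) (K / δ + 1)) (B' := fun _ => 0)
      (hcont.mono fun x hx => le_trans (le_max_left _ _) hx.1)
      (fun x hx => (hf x (le_trans (le_max_left _ _) hx.1)).hasDerivWithinAt)
      (le_max_left _ _) (fun _ => hasDerivAt_const _ _) (fun x hx hfx => ?_) ⟨hr, le_rfl⟩
    have hlevel : K / δ + 1 ≤ f x := hfx ▸ le_max_right _ _
    have hK : K = δ * (K / δ) := by field_simp
    nlinarith [hr₁ x (le_trans (le_max_right _ _) hx.1)]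
  rw [← Icc_union_Ici_eq_Ici (le_max_left r₀ r₁), image_union]
  exact (isCompact_Icc.bddAbove_image (hcont.mono Icc_subset_Ici_self)).union
    ⟨_, by rintro _ ⟨r, hr, rfl⟩; exact tail r hr⟩

theorem perturbed_triangular_energy_deriv_le {α β b k ω e U V : ℝ} (hα : 0 < α) (hω : 0 ≤ ω)
    (hb : 4 * b ^ 2 ≤ α * β * ω) (heα : 8 * |e| ≤ α) (heβ : 8 * |e| ≤ β)
    (heω : 4 * ω * |e| ≤ α) :
    2 * U * ((e - α) * U + b * V + k) + ω * (2 * V * (e * U + (e - β) * V))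
      ≤ -(α / 2) * U ^ 2 - β * (ω * V ^ 2) + 2 * k ^ 2 / α := by
  have hcoupling : α * (b * U * V) ≤ α ^ 2 / 4 * U ^ 2 + α * β * ω / 4 * V ^ 2 := by
    nlinarith [sq_nonneg (α / 2 * U - b * V), sq_nonneg V]
  have hforcing : α * (k * U) ≤ α ^ 2 / 4 * U ^ 2 + k ^ 2 := by
    nlinarith [sq_nonneg (α / 2 * U - k)]
  have hdiag : e * U ^ 2 ≤ |e| * U ^ 2 := by nlinarith [le_abs_self e, sq_nonneg U]
  have hdiag' : e * V ^ 2 ≤ |e| * V ^ 2 := by nlinarith [le_abs_self e, sq_nonneg V]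
  have hcross : 2 * (e * U * V) ≤ |e| * U ^ 2 + |e| * V ^ 2 := by
    rcases le_total 0 e with he | he
    · rw [abs_of_nonneg he]; nlinarith [mul_nonneg he (sq_nonneg (U - V))]
    · rw [abs_of_nonpos he]; nlinarith [mul_nonneg (neg_nonneg.2 he) (sq_nonneg (U + V))]
  have hsmallU := mul_le_mul_of_nonneg_right heα (sq_nonneg U)
  have hsmallωU := mul_le_mul_of_nonneg_right heω (sq_nonneg U)
  have hsmallωV := mul_le_mul_of_nonneg_right heβ (mul_nonneg hω (sq_nonneg V))
  have hcrossω := mul_le_mul_of_nonneg_left hcross hω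
  have hdiagω := mul_le_mul_of_nonneg_left hdiag' hω
  have hscaled : 0 ≤ α * (-(α / 2) * U ^ 2 - β * (ω * V ^ 2) + 2 * k ^ 2 / α -
      (2 * U * ((e - α) * U + b * V + k) + ω * (2 * V * (e * U + (e - β) * V)))) := by
    field_simp
    nlinarith
  exact sub_nonneg.1 (nonneg_of_mul_nonneg_right hscaled hα)

theorem exists_abs_le_of_perturbed_triangular {U V ε : ℝ → ℝ} {r₀ α β b k : ℝ} (hα : 0 < α)
    (hβ : 0 < β) (hε : Tendsto ε atTop (𝓝 0))
    (hU : ∀ r ≥ r₀, HasDerivAt U ((ε r - α) * U r + b * V r + k) r)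
    (hV : ∀ r ≥ r₀, HasDerivAt V (ε r * U r + (ε r - β) * V r) r) :
    ∃ C, ∀ r ≥ r₀, |U r| ≤ C := by
  -- `ω` is large enough to absorb the coupling `b U V`, and `η` small enough for the perturbation
  set ω := 4 * b ^ 2 / (α * β) + 1
  have hω : 0 < ω := by positivity
  have hb : 4 * b ^ 2 ≤ α * β * ω := by
    have : α * β * ω = 4 * b ^ 2 + α * β := by simp only [ω]; field_simp
    nlinarith [mul_pos hα hβ]
  set η := min (min (α / 8) (β / 8)) (α / (4 * ω))
  have hη : 0 < η := by positivity
  have hsmall : ∀ᶠ r in atTop, |ε r| ≤ η := by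
    simpa using hε.abs.eventually (ge_mem_nhds (by simpa using hη))
  set δ := min (α / 2) β
  have hdiss : ∀ᶠ r in atTop, 2 * U r * ((ε r - α) * U r + b * V r + k)
      + ω * (2 * V r * (ε r * U r + (ε r - β) * V r))
      ≤ -δ * (U r ^ 2 + ω * V r ^ 2) + 2 * k ^ 2 / α := by
    filter_upwards [hsmall] with r hr
    have heα : |ε r| ≤ α / 8 := hr.trans ((min_le_left _ _).trans (min_le_left _ _))
    have heβ : |ε r| ≤ β / 8 := hr.trans ((min_le_left _ _).trans (min_le_right _ _))
    have heω : |ε r| ≤ α / (4 * ω) := hr.trans (min_le_right _ _)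
    rw [le_div_iff₀ (by positivity)] at heω
    refine (perturbed_triangular_energy_deriv_le hα hω.le hb
      (by linarith) (by linarith) (by linarith)).trans ?_
    nlinarith [mul_le_mul_of_nonneg_right (min_le_left (α / 2) β) (sq_nonneg (U r)),
      mul_le_mul_of_nonneg_right (min_le_right (α / 2) β) (mul_nonneg hω.le (sq_nonneg (V r)))]
  obtain ⟨M, hM⟩ := bddAbove_image_Ici_of_deriv_le_neg_mul_add (f := fun r => U r ^ 2 + ω * V r ^ 2)
    (lt_min (by linarith) hβ) (fun r hr => by
      have hsq {f : ℝ → ℝ} {f' : ℝ} (h : HasDerivAt f f' r) :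
          HasDerivAt (fun x => f x ^ 2) (2 * f r * f') r := by simpa using h.fun_pow 2
      exact (hsq (hU r hr)).add ((hsq (hV r hr)).const_mul ω)) hdiss
  refine ⟨√M, fun r hr => Real.abs_le_sqrt ?_⟩
  nlinarith [hM ⟨r, hr, rfl⟩, mul_nonneg hω.le (sq_nonneg (V r))]

theorem abs_le_abs_add_sub_of_abs_deriv_le {w w' G G' : ℝ → ℝ} {r₀ : ℝ}
    (hw : ∀ r ≥ r₀, HasDerivAt w (w' r) r) (hG : ∀ r, HasDerivAt G (G' r) r)
    (hbound : ∀ r ≥ r₀, |w' r| ≤ G' r) : ∀ r ≥ r₀, |w r| ≤ |w r₀| + (G r - G r₀) := fun r hr =>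
  image_norm_le_of_norm_deriv_right_le_deriv_boundary (B := fun x => |w r₀| + (G x - G r₀))
    (fun x hx => (hw x hx.1).continuousAt.continuousWithinAt)
    (fun x hx => (hw x hx.1).hasDerivWithinAt) (by simp) (fun x => ((hG x).sub_const _).const_add _)
    (fun x hx => hbound x hx.1) ⟨hr, le_rfl⟩

theorem abs_le_of_abs_deriv_le_mul_exp {w w' : ℝ → ℝ} {r₀ s K : ℝ} (hs : s ≠ 0)
    (hw : ∀ r ≥ r₀, HasDerivAt w (w' r) r) (hbound : ∀ r ≥ r₀, |w' r| ≤ K * exp (s * r)) :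
    ∀ r ≥ r₀, |w r| ≤ |w r₀| + K / s * (exp (s * r) - exp (s * r₀)) := by
  have hG (x : ℝ) : HasDerivAt (fun x => K / s * exp (s * x)) (K * exp (s * x)) x := by
    refine ((((hasDerivAt_id' x).const_mul s).exp).const_mul (K / s)).congr_deriv ?_
    field_simp
  intro r hr
  rw [mul_sub]
  exact abs_le_abs_add_sub_of_abs_deriv_le hw hG hbound r hr

theorem exists_abs_le_mul_exp_of_abs_deriv_le {w w' : ℝ → ℝ} {r₀ s K : ℝ} (hs : 0 < s)
    (hw : ∀ r ≥ r₀, HasDerivAt w (w' r) r) (hbound : ∀ r ≥ r₀, |w' r| ≤ K * exp (s * r)) :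
    ∃ C, ∀ r ≥ r₀, |w r| ≤ C * exp (s * r) := by
  have hK : 0 ≤ K := nonneg_of_mul_nonneg_left ((abs_nonneg _).trans (hbound r₀ le_rfl)) (exp_pos _)
  refine ⟨|w r₀| / exp (s * r₀) + K / s, fun r hr => ?_⟩
  have hgrow : 1 ≤ exp (s * r) / exp (s * r₀) :=
    (one_le_div (exp_pos _)).2 (exp_le_exp.2 (by nlinarith))
  calc |w r| ≤ |w r₀| + K / s * (exp (s * r) - exp (s * r₀)) :=
        abs_le_of_abs_deriv_le_mul_exp hs.ne' hw hbound r hr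
    _ ≤ |w r₀| * (exp (s * r) / exp (s * r₀)) + K / s * exp (s * r) := by
        nlinarith [abs_nonneg (w r₀), div_nonneg hK hs.le, exp_pos (s * r₀)]
    _ = (|w r₀| / exp (s * r₀) + K / s) * exp (s * r) := by ring

theorem exists_abs_le_of_abs_deriv_le_mul_exp {w w' : ℝ → ℝ} {r₀ s K : ℝ} (hs : s < 0)
    (hw : ∀ r ≥ r₀, HasDerivAt w (w' r) r) (hbound : ∀ r ≥ r₀, |w' r| ≤ K * exp (s * r)) :
    ∃ C, ∀ r ≥ r₀, |w r| ≤ C := by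
  have hK : 0 ≤ K := nonneg_of_mul_nonneg_left ((abs_nonneg _).trans (hbound r₀ le_rfl)) (exp_pos _)
  refine ⟨|w r₀| - K / s * exp (s * r₀), fun r hr => ?_⟩
  have := abs_le_of_abs_deriv_le_mul_exp hs.ne hw hbound r hr
  nlinarith [div_nonpos_of_nonneg_of_nonpos hK hs.le, exp_pos (s * r)]

theorem exists_abs_le_mul_one_add_abs_of_abs_deriv_le {w w' : ℝ → ℝ} {r₀ K : ℝ}
    (hw : ∀ r ≥ r₀, HasDerivAt w (w' r) r) (hbound : ∀ r ≥ r₀, |w' r| ≤ K) :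
    ∃ C, ∀ r ≥ r₀, |w r| ≤ C * (1 + |r|) := by
  have hK : 0 ≤ K := (abs_nonneg _).trans (hbound r₀ le_rfl)
  refine ⟨|w r₀| + K * (1 + |r₀|), fun r hr => ?_⟩
  have := abs_le_abs_add_sub_of_abs_deriv_le (G := fun x => K * x) hw
    (fun x => by simpa using (hasDerivAt_id x).const_mul K) hbound r hr
  nlinarith [abs_nonneg r, abs_nonneg r₀, le_abs_self r, neg_abs_le r₀, abs_nonneg (w r₀),
    mul_nonneg hK (abs_nonneg r₀), mul_nonneg (abs_nonneg (w r₀)) (abs_nonneg r),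
    mul_nonneg (mul_nonneg hK (abs_nonneg r₀)) (abs_nonneg r)]

theorem hasDerivAt_mul_exp_const_mul {f : ℝ → ℝ} {f' r : ℝ} (s : ℝ) (hf : HasDerivAt f f' r) :
    HasDerivAt (fun x => f x * exp (s * x)) ((f' + s * f r) * exp (s * r)) r :=
  (hf.mul ((hasDerivAt_id' r).const_mul s).exp).congr_deriv (by ring)

theorem hasDerivAt_exp_mul_of_hasDerivAt_mul_exp_add {v : ℝ → ℝ} {a c g r : ℝ} (ha : a ≠ 0)
    (hv : HasDerivAt v (c * exp (-a * r) * v r + g) r) :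
    HasDerivAt (fun x => exp (c / a * exp (-a * x)) * v x) (exp (c / a * exp (-a * r)) * g) r :=
  (((((hasDerivAt_id' r).const_mul (-a)).exp).const_mul (c / a)).exp.mul hv).congr_deriv
    (by field_simp; ring)

theorem exists_abs_le_mul_exp_of_model_system {r₀ a c : ℝ} {u v : ℝ → ℝ} (ha : 0 < a)
    (ha3 : a < 3)
    (hu : ∀ r ≥ r₀, HasDerivAt u
      (c * exp (-a * r) * u r + c * exp ((2 - a) * r) * v r + c * exp ((3 - a) * r)) r)
    (hv : ∀ r ≥ r₀, HasDerivAt v (c * exp (-2 * r) * u r + c * exp (-a * r) * v r) r) :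
    ∃ C, ∀ r ≥ r₀, |u r| ≤ C * exp ((3 - a) * r) := by
  have hε : Tendsto (fun r => c * exp (-a * r)) atTop (𝓝 0) := by
    simpa using (tendsto_exp_atBot.comp
      (tendsto_id.const_mul_atTop_of_neg (neg_lt_zero.2 ha))).const_mul c
  have hexp (x y z r : ℝ) (h : x + y = z) : exp (x * r) * exp (y * r) = exp (z * r) := by
    rw [← exp_add, ← add_mul, h]
  have hcancel (r : ℝ) : exp ((3 - a) * r) * exp ((a - 3) * r) = 1 := by
    rw [hexp _ _ 0 r (by ring), zero_mul, exp_zero]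
  obtain ⟨C, hC⟩ := exists_abs_le_of_perturbed_triangular (U := fun r => u r * exp ((a - 3) * r))
    (V := fun r => v r * exp (-1 * r)) (α := 3 - a) (β := 1) (b := c) (k := c)
    (sub_pos.2 ha3) one_pos hε
    (fun r hr => (hasDerivAt_mul_exp_const_mul _ (hu r hr)).congr_deriv (by
      linear_combination (c * v r) * hexp (2 - a) (a - 3) (-1) r (by ring) + c * hcancel r))
    (fun r hr => (hasDerivAt_mul_exp_const_mul _ (hv r hr)).congr_deriv (by
      linear_combination (c * u r) *
        (hexp (-2) (-1) (-3) r (by ring) - hexp (-a) (a - 3) (-3) r (by ring))))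
  refine ⟨C, fun r hr => ?_⟩
  have hu_eq : u r = u r * exp ((a - 3) * r) * exp ((3 - a) * r) := by
    rw [mul_assoc, mul_comm (exp _), hcancel, mul_one]
  rw [hu_eq, abs_mul, abs_of_pos (exp_pos _)]
  exact mul_le_mul_of_nonneg_right (hC r hr) (exp_pos _).le

theorem exists_dominating_of_model_system {r₀ a c Cu : ℝ} {u v : ℝ → ℝ} (ha : 0 < a)
    (hv : ∀ r ≥ r₀, HasDerivAt v (c * exp (-2 * r) * u r + c * exp (-a * r) * v r) r)
    (hu : ∀ r ≥ r₀, |u r| ≤ Cu * exp ((3 - a) * r)) :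
    ∃ (w w' : ℝ → ℝ) (K : ℝ), (∀ r ≥ r₀, HasDerivAt w (w' r) r) ∧
      (∀ r ≥ r₀, |w' r| ≤ K * exp ((1 - a) * r)) ∧ ∀ r ≥ r₀, |v r| ≤ |w r| := by
  set Φ := |c| / a * exp (-a * r₀)
  set φ := fun r => c / a * exp (-a * r)
  have hφ (r : ℝ) (hr : r₀ ≤ r) : |φ r| ≤ Φ := by
    rw [abs_mul, abs_div, abs_of_pos ha, abs_of_pos (exp_pos _)]
    exact mul_le_mul_of_nonneg_left (exp_le_exp.2 (by nlinarith)) (by positivity)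
  refine ⟨fun r => exp Φ * (exp (φ r) * v r),
    fun r => exp Φ * (exp (φ r) * (c * exp (-2 * r) * u r)), exp (2 * Φ) * |c| * Cu,
    fun r hr => ((hasDerivAt_exp_mul_of_hasDerivAt_mul_exp_add ha.ne'
      ((hv r hr).congr_deriv (add_comm _ _))).const_mul _), fun r hr => ?_, fun r hr => ?_⟩
  · have hexp : exp (2 * Φ) * exp ((1 - a) * r)
        = exp Φ * exp Φ * exp (-2 * r) * exp ((3 - a) * r) := by
      simp only [← exp_add]; ring_nf
    have hφr : exp (φ r) ≤ exp Φ := exp_le_exp.2 ((le_abs_self _).trans (hφ r hr))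
    have hCu : 0 ≤ Cu * exp ((3 - a) * r) := (abs_nonneg _).trans (hu r hr)
    rw [abs_mul, abs_mul, abs_mul, abs_mul, abs_of_pos (exp_pos Φ), abs_of_pos (exp_pos (φ r)),
      abs_of_pos (exp_pos (-2 * r))]
    calc exp Φ * (exp (φ r) * (|c| * exp (-2 * r) * |u r|))
        ≤ exp Φ * (exp Φ * (|c| * exp (-2 * r) * (Cu * exp ((3 - a) * r)))) := by
          gcongr
          exact hu r hr
      _ = exp (2 * Φ) * |c| * Cu * exp ((1 - a) * r) := by
          linear_combination (-(|c| * Cu)) * hexp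
  · have hfactor : 1 ≤ exp Φ * exp (φ r) := by
      rw [← exp_add]
      exact one_le_exp (by linarith [neg_abs_le (φ r), hφ r hr])
    rw [abs_mul, abs_mul, abs_of_pos (exp_pos Φ), abs_of_pos (exp_pos (φ r)), ← mul_assoc]
    exact le_mul_of_one_le_left (abs_nonneg _) hfactor

theorem model_system_first_derivatives_general
    (r₀ a c : ℝ) (ha : 0 < a) (ha2 : a < 2)
    (u v : ℝ → ℝ)
    (hu : ∀ r ≥ r₀, HasDerivAt u
      (c * exp (-a * r) * u r + c * exp ((2 - a) * r) * v r + c * exp ((3 - a) * r)) r)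
    (hv : ∀ r ≥ r₀, HasDerivAt v
      (c * exp (-2 * r) * u r + c * exp (-a * r) * v r) r) :
    (∃ C : ℝ, ∀ r ≥ r₀, |u r| ≤ C * exp ((3 - a) * r)) ∧
    (a < 1 → ∃ C : ℝ, ∀ r ≥ r₀, |v r| ≤ C * exp ((1 - a) * r)) ∧
    (a = 1 → ∃ C : ℝ, ∀ r ≥ r₀, |v r| ≤ C * (1 + |r|)) ∧
    (1 < a → ∃ C : ℝ, ∀ r ≥ r₀, |v r| ≤ C) := by
  obtain ⟨Cu, hCu⟩ := exists_abs_le_mul_exp_of_model_system ha (by linarith) hu hv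
  obtain ⟨w, w', K, hw, hw', hvw⟩ := exists_dominating_of_model_system ha hv hCu
  refine ⟨⟨Cu, hCu⟩, fun h => ?_, fun h => ?_, fun h => ?_⟩
  · obtain ⟨C, hC⟩ := exists_abs_le_mul_exp_of_abs_deriv_le (sub_pos.2 h) hw hw'
    exact ⟨C, fun r hr => (hvw r hr).trans (hC r hr)⟩
  · subst h
    obtain ⟨C, hC⟩ := exists_abs_le_mul_one_add_abs_of_abs_deriv_le hw (K := K)
      (fun r hr => by simpa using hw' r hr)
    exact ⟨C, fun r hr => (hvw r hr).trans (hC r hr)⟩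
  · obtain ⟨C, hC⟩ := exists_abs_le_of_abs_deriv_le_mul_exp (sub_neg.2 h) hw hw'
    exact ⟨C, fun r hr => (hvw r hr).trans (hC r hr)⟩

/-- Asymptotics for the first model system
`u' = c e^{-ar} u + c e^{(2-a)r} v + c e^{(3-a)r}`, `v' = c e^{-2r} u + c e^{-ar} v`
with `0 < a < 2`: every solution satisfies `u = O(e^{(3-a)r})`, and `v = O(e^{(1-a)r})` if
`a < 1`, `v = O(r)` if `a = 1`, `v = O(1)` if `a > 1`. -/
theorem model_system_first_derivatives
    (r₀ a c : ℝ) (ha : 0 < a) (ha2 : a < 2) (hc : 0 < c)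
    (u v : ℝ → ℝ)
    (hu : ∀ r ≥ r₀, HasDerivAt u
      (c * exp (-a * r) * u r + c * exp ((2 - a) * r) * v r + c * exp ((3 - a) * r)) r)
    (hv : ∀ r ≥ r₀, HasDerivAt v
      (c * exp (-2 * r) * u r + c * exp (-a * r) * v r) r) :
    (∃ C : ℝ, ∀ r ≥ r₀, |u r| ≤ C * exp ((3 - a) * r)) ∧
    (a < 1 → ∃ C : ℝ, ∀ r ≥ r₀, |v r| ≤ C * exp ((1 - a) * r)) ∧
    (a = 1 → ∃ C : ℝ, ∀ r ≥ r₀, |v r| ≤ C * (1 + |r|)) ∧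
    (1 < a → ∃ C : ℝ, ∀ r ≥ r₀, |v r| ≤ C) :=
  model_system_first_derivatives_general r₀ a c ha ha2 u v hu hv
end

section
/- Consider the coupled linear system u' = c e^{−ar} u + c e^{(2−a)r} v + c e^{(4−a)r}, v' = c e^{−2r} u + c e^{−ar} v + c e^{(1−a)r} on [r₀, ∞), with c > 0 and 1 < a < 2. Then every solution satisfies u = O(e^{(4−a)r}) and v = O(e^{(2−a)r}). -/
open Real Filter Topology Set

/-!
With `β = 2 - a`, the rescaled functions `U = u e^{-(4-a)r}` and `V = v e^{-(2-a)r}` satisfy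
`U' = (p - (β + 2)) U + p V + c` and `V' = c U + (p - β) V + c e^{-r}`, where `p = c e^{-ar} → 0`.
Once `p` is small, the weighted energy `E = l U² + V²` with `l = 1 + c²/β` obeys
`E' ≤ -(β/4) E + 4 l (l + 1)`, so `E` stays bounded; on the compact initial segment `U` and `V`
are bounded by continuity.
-/

lemma rescaled_energy_deriv_le {β c l p q U V : ℝ} (hβ : 0 < β) (hl : 1 ≤ l) (hcl : c ^ 2 ≤ l * β)
    (hp : 8 * (l + 2) * |p| ≤ β) (hq : |q| ≤ |c|) :
    2 * l * U * ((p - (β + 2)) * U + p * V + c) + 2 * V * (c * U + (p - β) * V + q)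
      ≤ -(β / 4) * (l * U ^ 2 + V ^ 2) + 4 * l * (l + 1) := by
  have hl0 : 0 < l := by linarith
  have hp0 : 0 ≤ |p| := abs_nonneg p
  have hq2 : q ^ 2 ≤ c ^ 2 := sq_le_sq.2 hq
  have hpU : p * U ^ 2 ≤ |p| * U ^ 2 := mul_le_mul_of_nonneg_right (le_abs_self p) (sq_nonneg U)
  have hpV : p * V ^ 2 ≤ |p| * V ^ 2 := mul_le_mul_of_nonneg_right (le_abs_self p) (sq_nonneg V)
  have hpUV : 2 * p * (U * V) ≤ |p| * (U ^ 2 + V ^ 2) := by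
    rcases abs_cases p with ⟨h, _⟩ | ⟨h, _⟩ <;> rw [h] <;>
      nlinarith [mul_nonneg hp0 (sq_nonneg (U - V)), mul_nonneg hp0 (sq_nonneg (U + V))]
  have hcUV : 2 * c * (U * V) ≤ (β / 2) * V ^ 2 + 2 * l * U ^ 2 := by
    nlinarith [sq_nonneg (β * V - 2 * c * U), mul_le_mul_of_nonneg_right hcl (sq_nonneg U)]
  have hcU : 2 * l * c * U ≤ (l * β / 4) * U ^ 2 + 4 * l ^ 2 := by
    nlinarith [mul_nonneg hl0.le (sq_nonneg (β * U - 4 * c)), mul_le_mul_of_nonneg_left hcl hl0.le]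
  have hqV : 2 * q * V ≤ (β / 4) * V ^ 2 + 4 * l := by
    nlinarith [sq_nonneg (β * V - 4 * q)]
  have hpsmall : 3 * |p| ≤ β / 8 := by nlinarith
  nlinarith [mul_le_mul_of_nonneg_left hpU hl0.le, mul_le_mul_of_nonneg_left hpUV hl0.le,
    mul_le_mul_of_nonneg_right hpsmall (mul_nonneg hl0.le (sq_nonneg U)),
    mul_le_mul_of_nonneg_right hp (sq_nonneg V), mul_nonneg hl0.le (sq_nonneg U),
    mul_nonneg hβ.le (sq_nonneg V), mul_nonneg (mul_nonneg hβ.le hl0.le) (sq_nonneg U)]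

lemma le_max_of_hasDerivAt_le_neg_mul_add {E E' : ℝ → ℝ} {K M r₁ : ℝ} (hK : 0 < K)
    (hE : ∀ r ≥ r₁, HasDerivAt E (E' r) r) (hE' : ∀ r ≥ r₁, E' r ≤ -K * E r + M) :
    ∀ r ≥ r₁, E r ≤ max (E r₁) (M / K) := by
  set F : ℝ → ℝ := fun r => (E r - M / K) * exp (K * r)
  have hF : ∀ r ≥ r₁, HasDerivAt F ((E' r + K * E r - M) * exp (K * r)) r := by
    intro r hr
    have hexp : HasDerivAt (fun r => exp (K * r)) (exp (K * r) * K) r :=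
      (hasDerivAt_const_mul K).exp
    refine (((hE r hr).sub_const (M / K)).fun_mul hexp).congr_deriv ?_
    field_simp
    ring
  have hanti : AntitoneOn F (Ici r₁) := by
    refine antitoneOn_of_hasDerivWithinAt_nonpos (convex_Ici r₁)
      (fun x hx => (hF x hx).continuousAt.continuousWithinAt)
      (fun x hx => (hF x (interior_subset hx)).hasDerivWithinAt) fun x hx => ?_
    have := hE' x (interior_subset hx)
    exact mul_nonpos_of_nonpos_of_nonneg (by linarith) (exp_pos _).le
  intro r hr
  have hFr : (E r - M / K) * exp (K * r) ≤ (E r₁ - M / K) * exp (K * r₁) :=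
    hanti self_mem_Ici hr hr
  have hexp : exp (K * r₁) ≤ exp (K * r) := exp_le_exp.2 (by nlinarith)
  rcases le_total (E r₁) (M / K) with h | h
  · nlinarith [exp_pos (K * r), exp_pos (K * r₁), le_max_right (E r₁) (M / K)]
  · nlinarith [exp_pos (K * r), mul_le_mul_of_nonneg_left hexp (sub_nonneg.2 h),
      le_max_left (E r₁) (M / K)]

lemma exists_forall_abs_le_of_continuousOn_Ici {f : ℝ → ℝ} {r₀ B : ℝ}
    (hf : ContinuousOn f (Ici r₀)) (hB : ∀ᶠ r in atTop, |f r| ≤ B) :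
    ∃ C, ∀ r ≥ r₀, |f r| ≤ C := by
  obtain ⟨r₁, hr₁⟩ := eventually_atTop.1 hB
  obtain ⟨C, hC⟩ := isCompact_Icc.exists_bound_of_continuousOn
    (hf.mono (Icc_subset_Ici_self : Icc r₀ r₁ ⊆ Ici r₀))
  refine ⟨max C B, fun r hr => ?_⟩
  rcases le_total r r₁ with h | h
  · exact (hC r ⟨hr, h⟩).trans (le_max_left C B)
  · exact (hr₁ r h).trans (le_max_right C B)

lemma exists_forall_abs_le_mul_exp {f : ℝ → ℝ} {k r₀ B : ℝ} (hf : ContinuousOn f (Ici r₀))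
    (hB : ∀ᶠ r in atTop, |f r * exp (-k * r)| ≤ B) :
    ∃ C, ∀ r ≥ r₀, |f r| ≤ C * exp (k * r) := by
  have hcont : ContinuousOn (fun r => f r * exp (-k * r)) (Ici r₀) := by fun_prop
  obtain ⟨C, hC⟩ := exists_forall_abs_le_of_continuousOn_Ici hcont hB
  refine ⟨C, fun r hr => ?_⟩
  have hf : f r = f r * exp (-k * r) * exp (k * r) := by
    rw [mul_assoc, ← exp_add, neg_mul, neg_add_cancel, exp_zero, mul_one]
  rw [hf, abs_mul, abs_of_pos (exp_pos _)]
  exact mul_le_mul_of_nonneg_right (hC r hr) (exp_pos _).le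

lemma hasDerivAt_mul_exp_neg_mul {f : ℝ → ℝ} {f' k x : ℝ} (hf : HasDerivAt f f' x) :
    HasDerivAt (fun x => f x * exp (-k * x)) ((f' - k * f x) * exp (-k * x)) x := by
  refine (hf.fun_mul (hasDerivAt_const_mul (-k)).exp).congr_deriv ?_
  ring

theorem exists_eventually_abs_le_of_rescaled_system {β c : ℝ} {U V p q : ℝ → ℝ} (hβ : 0 < β)
    (hU : ∀ᶠ r in atTop, HasDerivAt U ((p r - (β + 2)) * U r + p r * V r + c) r)
    (hV : ∀ᶠ r in atTop, HasDerivAt V (c * U r + (p r - β) * V r + q r) r)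
    (hp : Tendsto p atTop (𝓝 0)) (hq : ∀ᶠ r in atTop, |q r| ≤ |c|) :
    ∃ B, ∀ᶠ r in atTop, |U r| ≤ B ∧ |V r| ≤ B := by
  -- `l` is chosen so that the coupling `2 c U V` is absorbed by `l U² + V²`
  set l := 1 + c ^ 2 / β
  have hl : 1 ≤ l := le_add_of_nonneg_right (by positivity)
  have hcl : c ^ 2 ≤ l * β := by
    have : l * β = β + c ^ 2 := by rw [add_mul, one_mul, div_mul_cancel₀ _ hβ.ne']
    linarith
  have hpsmall : ∀ᶠ r in atTop, 8 * (l + 2) * |p r| ≤ β := by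
    have h := (hp.abs.const_mul (8 * (l + 2)))
    rw [abs_zero, mul_zero] at h
    exact h.eventually_le_const hβ
  obtain ⟨r₁, hr₁⟩ := eventually_atTop.1 (hU.and (hV.and (hpsmall.and hq)))
  set E := fun r => l * U r ^ 2 + V r ^ 2
  have hE : ∀ r ≥ r₁, HasDerivAt E (2 * l * U r * ((p r - (β + 2)) * U r + p r * V r + c)
      + 2 * V r * (c * U r + (p r - β) * V r + q r)) r := by
    intro r hr
    refine ((((hr₁ r hr).1.fun_pow 2).const_mul l).add ((hr₁ r hr).2.1.fun_pow 2)).congr_deriv ?_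
    ring
  have hbound := le_max_of_hasDerivAt_le_neg_mul_add (by positivity : 0 < β / 4) hE
    fun r hr => rescaled_energy_deriv_le hβ hl hcl (hr₁ r hr).2.2.1 (hr₁ r hr).2.2.2
  refine ⟨√(max (E r₁) (4 * l * (l + 1) / (β / 4))), eventually_atTop.2 ⟨r₁, fun r hr => ?_⟩⟩
  have hEr := hbound r hr
  constructor <;> apply abs_le_sqrt <;> nlinarith [sq_nonneg (U r), sq_nonneg (V r)]

theorem model_system_second_derivatives_general
    (r₀ a c : ℝ) (ha : 1 < a) (ha2 : a < 2)
    (u v : ℝ → ℝ)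
    (hu : ∀ r ≥ r₀, HasDerivAt u
      (c * exp (-a * r) * u r + c * exp ((2 - a) * r) * v r + c * exp ((4 - a) * r)) r)
    (hv : ∀ r ≥ r₀, HasDerivAt v
      (c * exp (-2 * r) * u r + c * exp (-a * r) * v r + c * exp ((1 - a) * r)) r) :
    (∃ C : ℝ, ∀ r ≥ r₀, |u r| ≤ C * exp ((4 - a) * r)) ∧
    (∃ C : ℝ, ∀ r ≥ r₀, |v r| ≤ C * exp ((2 - a) * r)) := by
  set p := fun r => c * exp (-a * r)
  have hU : ∀ r ≥ r₀, HasDerivAt (fun r => u r * exp (-(4 - a) * r))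
      ((p r - ((2 - a) + 2)) * (u r * exp (-(4 - a) * r))
        + p r * (v r * exp (-(2 - a) * r)) + c) r := by
    intro r hr
    refine (hasDerivAt_mul_exp_neg_mul (hu r hr)).congr_deriv ?_
    have e₁ : exp ((2 - a) * r) * exp (-(4 - a) * r) = exp (-a * r) * exp (-(2 - a) * r) := by
      rw [← exp_add, ← exp_add]; ring_nf
    have e₂ : exp ((4 - a) * r) * exp (-(4 - a) * r) = 1 := by
      rw [← exp_add, ← exp_zero]; ring_nf
    linear_combination (c * v r) * e₁ + c * e₂
  have hV : ∀ r ≥ r₀, HasDerivAt (fun r => v r * exp (-(2 - a) * r))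
      (c * (u r * exp (-(4 - a) * r)) + (p r - (2 - a)) * (v r * exp (-(2 - a) * r))
        + c * exp (-r)) r := by
    intro r hr
    refine (hasDerivAt_mul_exp_neg_mul (hv r hr)).congr_deriv ?_
    have e₁ : exp (-2 * r) * exp (-(2 - a) * r) = exp (-(4 - a) * r) := by
      rw [← exp_add]; ring_nf
    have e₂ : exp ((1 - a) * r) * exp (-(2 - a) * r) = exp (-r) := by
      rw [← exp_add]; ring_nf
    linear_combination (c * u r) * e₁ + c * e₂
  have hp : Tendsto p atTop (𝓝 0) := by
    have ha0 : -a < 0 := by linarith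
    have h := (tendsto_exp_atBot.comp (tendsto_id.const_mul_atTop_of_neg ha0)).const_mul c
    rw [mul_zero] at h
    exact h
  have hq : ∀ᶠ r in atTop, |c * exp (-r)| ≤ |c| := by
    filter_upwards [eventually_ge_atTop 0] with r hr
    rw [abs_mul, abs_of_pos (exp_pos _)]
    exact mul_le_of_le_one_right (abs_nonneg c) (exp_le_one_iff.2 (by linarith))
  obtain ⟨B, hB⟩ := exists_eventually_abs_le_of_rescaled_system (by linarith : 0 < 2 - a)
    ((eventually_ge_atTop r₀).mono hU) ((eventually_ge_atTop r₀).mono hV) hp hq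
  exact ⟨exists_forall_abs_le_mul_exp (fun r hr => (hu r hr).continuousAt.continuousWithinAt)
      (hB.mono fun _ h => h.1),
    exists_forall_abs_le_mul_exp (fun r hr => (hv r hr).continuousAt.continuousWithinAt)
      (hB.mono fun _ h => h.2)⟩

/-- Asymptotics for the second model system
`u' = c e^{-ar} u + c e^{(2-a)r} v + c e^{(4-a)r}`,
`v' = c e^{-2r} u + c e^{-ar} v + c e^{(1-a)r}` with `1 < a < 2`: every solution satisfies
`u = O(e^{(4-a)r})` and `v = O(e^{(2-a)r})`. -/
theorem model_system_second_derivatives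
    (r₀ a c : ℝ) (ha : 1 < a) (ha2 : a < 2) (hc : 0 < c)
    (u v : ℝ → ℝ)
    (hu : ∀ r ≥ r₀, HasDerivAt u
      (c * exp (-a * r) * u r + c * exp ((2 - a) * r) * v r + c * exp ((4 - a) * r)) r)
    (hv : ∀ r ≥ r₀, HasDerivAt v
      (c * exp (-2 * r) * u r + c * exp (-a * r) * v r + c * exp ((1 - a) * r)) r) :
    (∃ C : ℝ, ∀ r ≥ r₀, |u r| ≤ C * exp ((4 - a) * r)) ∧
    (∃ C : ℝ, ∀ r ≥ r₀, |v r| ≤ C * exp ((2 - a) * r)) :=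
  model_system_second_derivatives_general r₀ a c ha ha2 u v hu hv
end
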